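/- arXiv:1901.02523 — 4 statements merged into one kernel-verified Lean document; each statement's English description precedes it below -/
import Mathlib

section
/- If an encoding scheme is reliable, i.e., $W$ is $\overline{\mathbb{P}}$-a.s. measurable with respect to $\mathcal{F}^Y_{1:\infty}$, then for any prior $\nu \ll \bar{\nu}$, $\lim_{n\to\infty} \mathbb{E}_\nu[\|\psi_n - \bar{\psi}_n\|] = 0$, where $\psi_n$ and $\bar{\psi}_n$ are the posteriors of $W$ given $Y_{1:n}$ under priors $\nu$ and $\bar{\nu}$ respectively. -/
/-!
Under `μ = μ̄.withDensity (r ∘ W)`, with `r = dν/dν̄`, the joint law of `(X, W)` is the `μ̄`-law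
tilted by `r(w)`. By Bayes' rule the `μ`-posterior of `W` given `X = x` is the `μ̄`-posterior
tilted by `r / m(x)`, where `m(x) = E_μ̄[r(W) | X = x]`, so its total variation distance to the
`μ̄`-posterior is at most `m(x)⁻¹ E_μ̄[|r(W) - m(x)| | X = x]`. The `X`-marginal of `μ` has density
`m` with respect to that of `μ̄`, hence the `μ`-expected distance is at most
`E_μ̄ |r(W) - E_μ̄[r(W) | X]|`. For `X = Y_{1:n}` this is the `L¹` error of the Lévy martingale
of `r(W)`, which tends to `0` because reliability makes `r(W)` measurable with respect to
`ℱ^Y_{1:∞}` up to a `μ̄`-null set.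
-/

open MeasureTheory ProbabilityTheory Filter

/-- Total variation distance `‖P - Q‖ = sup_A |P(A) - Q(A)|` (sup over measurable sets). -/
noncomputable def tvDist {X : Type*} [MeasurableSpace X] (P Q : Measure X) : ℝ :=
  ⨆ A : {A : Set X // MeasurableSet A}, |(P A.1).toReal - (Q A.1).toReal|

open scoped ENNReal

section TotalVariation

variable {X : Type*} [MeasurableSpace X]

lemma tvDist_nonneg (P Q : Measure X) : 0 ≤ tvDist P Q :=
  Real.iSup_nonneg fun _ => abs_nonneg _

lemma tvDist_withDensity_le (P : Measure X) [IsFiniteMeasure P] {f : X → ℝ≥0∞}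
    (hf : Measurable f) (hfi : ∫⁻ x, f x ∂P ≠ ∞) :
    tvDist (P.withDensity f) P ≤ ∫ x, |(f x).toReal - 1| ∂P := by
  have hf_lt_top : ∀ᵐ x ∂P, f x < ∞ := ae_lt_top hf hfi
  have hf_int : Integrable (fun x => (f x).toReal) P :=
    integrable_toReal_of_lintegral_ne_top hf.aemeasurable hfi
  have hint : Integrable (fun x => (f x).toReal - 1) P := hf_int.sub (integrable_const 1)
  refine Real.iSup_le (fun ⟨A, hA⟩ => ?_) (integral_nonneg fun _ => abs_nonneg _)
  have hdiff : (P.withDensity f A).toReal - (P A).toReal = ∫ x in A, ((f x).toReal - 1) ∂P := by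
    rw [integral_sub hf_int.integrableOn (integrable_const 1), setIntegral_const,
      integral_toReal hf.aemeasurable.restrict (ae_restrict_of_ae hf_lt_top),
      withDensity_apply _ hA, smul_eq_mul, mul_one, measureReal_def]
  calc |(P.withDensity f A).toReal - (P A).toReal|
      = |∫ x in A, ((f x).toReal - 1) ∂P| := by rw [hdiff]
    _ ≤ ∫ x in A, |(f x).toReal - 1| ∂P := abs_integral_le_integral_abs
    _ ≤ ∫ x, |(f x).toReal - 1| ∂P :=
      setIntegral_le_integral hint.abs (ae_of_all _ fun _ => abs_nonneg _)

lemma enorm_toReal_inv_mul_sub_one {c : ℝ≥0∞} (hc₀ : c ≠ 0) (hc : c ≠ ∞) (a : ℝ≥0∞) :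
    ‖(c⁻¹ * a).toReal - 1‖ₑ = c⁻¹ * ‖a.toReal - c.toReal‖ₑ := by
  have hc' : c.toReal ≠ 0 := ENNReal.toReal_ne_zero.mpr ⟨hc₀, hc⟩
  have hfactor : (c⁻¹ * a).toReal - 1 = c.toReal⁻¹ * (a.toReal - c.toReal) := by
    rw [ENNReal.toReal_mul, ENNReal.toReal_inv]
    field_simp
  rw [hfactor, enorm_mul, Real.enorm_of_nonneg (inv_nonneg.mpr ENNReal.toReal_nonneg),
    ENNReal.ofReal_inv_of_pos (ENNReal.toReal_pos hc₀ hc), ENNReal.ofReal_toReal hc]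

lemma ofReal_tvDist_withDensity_inv_mul_le (P : Measure X) [IsFiniteMeasure P] {f : X → ℝ≥0∞}
    (hf : Measurable f) (hfi : ∫⁻ x, f x ∂P ≠ ∞) {c : ℝ≥0∞} (hc₀ : c ≠ 0) (hc : c ≠ ∞) :
    ENNReal.ofReal (tvDist (P.withDensity fun x => c⁻¹ * f x) P)
      ≤ c⁻¹ * ∫⁻ x, ‖(f x).toReal - c.toReal‖ₑ ∂P := by
  have hcfi : ∫⁻ x, c⁻¹ * f x ∂P ≠ ∞ := by
    rw [lintegral_const_mul _ hf]
    exact ENNReal.mul_ne_top (ENNReal.inv_ne_top.mpr hc₀) hfi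
  calc ENNReal.ofReal (tvDist (P.withDensity fun x => c⁻¹ * f x) P)
      ≤ ENNReal.ofReal (∫ x, |(c⁻¹ * f x).toReal - 1| ∂P) :=
        ENNReal.ofReal_le_ofReal (tvDist_withDensity_le P (hf.const_mul _) hcfi)
    _ = ∫⁻ x, ‖(c⁻¹ * f x).toReal - 1‖ₑ ∂P := by
        simp_rw [← Real.norm_eq_abs]
        exact ofReal_integral_norm_eq_lintegral_enorm
          ((integrable_toReal_of_lintegral_ne_top (hf.const_mul _).aemeasurable hcfi).sub
            (integrable_const 1))
    _ = c⁻¹ * ∫⁻ x, ‖(f x).toReal - c.toReal‖ₑ ∂P := by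
        simp_rw [enorm_toReal_inv_mul_sub_one hc₀ hc]
        exact lintegral_const_mul _ (hf.ennreal_toReal.sub_const _).enorm

end TotalVariation

namespace MeasureTheory

lemma integrable_toReal_of_isFiniteMeasure_withDensity {α : Type*} [MeasurableSpace α]
    (μ : Measure α) {f : α → ℝ≥0∞} (hf : AEMeasurable f μ) [IsFiniteMeasure (μ.withDensity f)] :
    Integrable (fun a => (f a).toReal) μ := by
  refine integrable_toReal_of_lintegral_ne_top hf ?_
  simpa [withDensity_apply _ MeasurableSet.univ] using measure_ne_top (μ.withDensity f) Set.univ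

namespace Measure

variable {α γ : Type*} [MeasurableSpace α] [MeasurableSpace γ]

lemma map_withDensity_comp (μ : Measure α) {g : α → γ} {f : γ → ℝ≥0∞} (hg : Measurable g)
    (hf : Measurable f) :
    (μ.withDensity fun a => f (g a)).map g = (μ.map g).withDensity f := by
  ext s hs
  rw [map_apply hg hs, withDensity_apply _ (hg hs), withDensity_apply _ hs,
    setLIntegral_map hs hf hg]

lemma isFiniteMeasure_map_withDensity (μ : Measure α) {g : α → γ} {f : γ → ℝ≥0∞}
    (hg : Measurable g) (hf : Measurable f) [IsFiniteMeasure (μ.withDensity fun a => f (g a))] :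
    IsFiniteMeasure ((μ.map g).withDensity f) := by
  rw [← map_withDensity_comp μ hg hf]
  infer_instance

end Measure

end MeasureTheory

namespace ProbabilityTheory.Kernel

variable {β 𝒲 : Type*} [MeasurableSpace β] [MeasurableSpace 𝒲] {r : 𝒲 → ℝ≥0∞}

/-- Where `∫⁻ v, r v ∂κ x` is `0` or `∞`, the normaliser turns `reweight κ r x` into the zero
measure; this keeps the kernel finite. -/
noncomputable def reweight (κ : Kernel β 𝒲) [IsSFiniteKernel κ] (r : 𝒲 → ℝ≥0∞) : Kernel β 𝒲 :=
  κ.withDensity fun x w => (∫⁻ v, r v ∂κ x)⁻¹ * r w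

lemma measurable_reweight_density (κ : Kernel β 𝒲) (hr : Measurable r) :
    Measurable (Function.uncurry fun x w => (∫⁻ v, r v ∂κ x)⁻¹ * r w) :=
  (hr.lintegral_kernel.inv.comp measurable_fst).mul (hr.comp measurable_snd)

lemma measurable_enorm_toReal_sub_lintegral (κ : Kernel β 𝒲) (hr : Measurable r) :
    Measurable fun p : β × 𝒲 => ‖(r p.2).toReal - (∫⁻ v, r v ∂κ p.1).toReal‖ₑ :=
  ((hr.comp measurable_snd).ennreal_toReal.sub
    (hr.lintegral_kernel.comp measurable_fst).ennreal_toReal).enorm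

variable (κ : Kernel β 𝒲) [IsSFiniteKernel κ]

lemma reweight_apply (hr : Measurable r) (x : β) :
    κ.reweight r x = (κ x).withDensity fun w => (∫⁻ v, r v ∂κ x)⁻¹ * r w :=
  Kernel.withDensity_apply κ (measurable_reweight_density κ hr) x

lemma isFiniteKernel_reweight (hr : Measurable r) : IsFiniteKernel (κ.reweight r) := by
  refine ⟨⟨1, ENNReal.one_lt_top, fun x => ?_⟩⟩
  rw [reweight_apply κ hr, withDensity_apply _ MeasurableSet.univ, Measure.restrict_univ,
    lintegral_const_mul _ hr]
  exact ENNReal.inv_mul_le_one _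

lemma withDensity_compProd_reweight (μ : Measure β) [SFinite μ] (hr : Measurable r)
    (hm : ∀ᵐ x ∂μ, ∫⁻ w, r w ∂κ x ≠ ∞) :
    μ.withDensity (fun x => ∫⁻ w, r w ∂κ x) ⊗ₘ κ.reweight r
      = (μ ⊗ₘ κ).withDensity fun p => r p.2 := by
  have := isFiniteKernel_reweight κ hr
  have hr₂ : Measurable fun p : β × 𝒲 => r p.2 := hr.comp measurable_snd
  ext s hs
  have hsec : ∀ x, MeasurableSet (Prod.mk x ⁻¹' s) := fun x => measurable_prodMk_left hs
  rw [Measure.compProd_apply hs, lintegral_withDensity_eq_lintegral_mul _ hr.lintegral_kernel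
      (Kernel.measurable_kernel_prodMk_left hs), withDensity_apply _ hs,
    ← lintegral_indicator hs, Measure.lintegral_compProd (hr₂.indicator hs)]
  refine lintegral_congr_ae ?_
  filter_upwards [hm] with x hx
  have hsection : ∫⁻ w, s.indicator (fun p => r p.2) (x, w) ∂κ x
      = ∫⁻ w in Prod.mk x ⁻¹' s, r w ∂κ x := by
    rw [← lintegral_indicator (hsec x)]
    rfl
  rw [Pi.mul_apply, hsection, reweight_apply κ hr, withDensity_apply _ (hsec x),
    lintegral_const_mul _ hr, ← mul_assoc]
  by_cases hx₀ : ∫⁻ w, r w ∂κ x = 0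
  · have : ∫⁻ w in Prod.mk x ⁻¹' s, r w ∂κ x = 0 :=
      le_antisymm (hx₀ ▸ setLIntegral_le_lintegral _ _) zero_le
    rw [this, mul_zero]
  · rw [ENNReal.mul_inv_cancel hx₀ hx, one_mul]

end ProbabilityTheory.Kernel

namespace MeasureTheory.Measure

variable {β 𝒲 : Type*} [MeasurableSpace β] [MeasurableSpace 𝒲] {r : 𝒲 → ℝ≥0∞}

lemma fst_compProd_withDensity_snd (μ : Measure β) [SFinite μ] (κ : Kernel β 𝒲)
    [IsSFiniteKernel κ] (hr : Measurable r) :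
    ((μ ⊗ₘ κ).withDensity fun p => r p.2).fst = μ.withDensity fun x => ∫⁻ w, r w ∂κ x := by
  ext s hs
  rw [fst_apply hs, ← Set.prod_univ, withDensity_apply _ (hs.prod MeasurableSet.univ),
    setLIntegral_compProd (f := fun p => r p.2) (hr.comp measurable_snd) hs MeasurableSet.univ,
    withDensity_apply _ hs]
  simp only [Measure.restrict_univ]

variable [StandardBorelSpace 𝒲] [Nonempty 𝒲] (ρ : Measure (β × 𝒲)) [IsFiniteMeasure ρ]

lemma fst_withDensity_snd (hr : Measurable r) :
    (ρ.withDensity fun p => r p.2).fst = ρ.fst.withDensity fun x => ∫⁻ w, r w ∂ρ.condKernel x := by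
  conv_lhs => rw [← ρ.disintegrate ρ.condKernel]
  exact fst_compProd_withDensity_snd ρ.fst ρ.condKernel hr

lemma lintegral_fst_withDensity_snd_le (hr : Measurable r) :
    ∫⁻ x, (∫⁻ w, r w ∂ρ.condKernel x)⁻¹
        * ∫⁻ w, ‖(r w).toReal - (∫⁻ v, r v ∂ρ.condKernel x).toReal‖ₑ ∂ρ.condKernel x
        ∂(ρ.withDensity fun p => r p.2).fst
      ≤ ∫⁻ p, ‖(r p.2).toReal - (∫⁻ v, r v ∂ρ.condKernel p.1).toReal‖ₑ ∂ρ := by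
  rw [fst_withDensity_snd ρ hr]
  calc _ ≤ ∫⁻ x, (∫⁻ w, r w ∂ρ.condKernel x) * ((∫⁻ w, r w ∂ρ.condKernel x)⁻¹
        * ∫⁻ w, ‖(r w).toReal - (∫⁻ v, r v ∂ρ.condKernel x).toReal‖ₑ ∂ρ.condKernel x) ∂ρ.fst :=
        lintegral_withDensity_le_lintegral_mul _ hr.lintegral_kernel _
    _ ≤ ∫⁻ x, ∫⁻ w, ‖(r w).toReal - (∫⁻ v, r v ∂ρ.condKernel x).toReal‖ₑ ∂ρ.condKernel x
        ∂ρ.fst :=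
        lintegral_mono fun x => by
          rw [← mul_assoc]
          exact mul_le_of_le_one_left' (ENNReal.mul_inv_le_one _)
    _ = _ := by
        rw [← lintegral_compProd (ρ.condKernel.measurable_enorm_toReal_sub_lintegral hr),
          ρ.disintegrate ρ.condKernel]

variable [IsFiniteMeasure (ρ.withDensity fun p => r p.2)]

lemma ae_lintegral_condKernel_ne_top (hr : Measurable r) :
    ∀ᵐ x ∂ρ.fst, ∫⁻ w, r w ∂ρ.condKernel x ≠ ∞ := by
  have hfin : ∫⁻ x, ∫⁻ w, r w ∂ρ.condKernel x ∂ρ.fst ≠ ∞ := by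
    rw [← setLIntegral_univ, ← withDensity_apply _ MeasurableSet.univ, ← fst_withDensity_snd ρ hr]
    exact measure_ne_top _ _
  exact (ae_lt_top hr.lintegral_kernel hfin).mono fun _ => LT.lt.ne

lemma condKernel_withDensity_snd (hr : Measurable r) :
    ∀ᵐ x ∂(ρ.withDensity fun p => r p.2).fst,
      (ρ.withDensity fun p => r p.2).condKernel x = ρ.condKernel.reweight r x := by
  have := ρ.condKernel.isFiniteKernel_reweight hr
  refine (eq_condKernel_of_measure_eq_compProd (ρ := ρ.withDensity fun p => r p.2)
    (ρ.condKernel.reweight r) ?_).mono fun _ => Eq.symm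
  rw [fst_withDensity_snd ρ hr,
    ρ.condKernel.withDensity_compProd_reweight ρ.fst hr (ae_lintegral_condKernel_ne_top ρ hr),
    ρ.disintegrate ρ.condKernel]

lemma ae_ofReal_tvDist_condKernel_withDensity_snd_le (hr : Measurable r) :
    ∀ᵐ x ∂(ρ.withDensity fun p => r p.2).fst,
      ENNReal.ofReal (tvDist ((ρ.withDensity fun p => r p.2).condKernel x) (ρ.condKernel x))
        ≤ (∫⁻ w, r w ∂ρ.condKernel x)⁻¹
          * ∫⁻ w, ‖(r w).toReal - (∫⁻ v, r v ∂ρ.condKernel x).toReal‖ₑ ∂ρ.condKernel x := by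
  have hpost := condKernel_withDensity_snd ρ hr
  rw [fst_withDensity_snd ρ hr, ae_withDensity_iff hr.lintegral_kernel] at hpost ⊢
  filter_upwards [hpost, ae_lintegral_condKernel_ne_top ρ hr] with x hx hx_top hx₀
  rw [hx hx₀, ρ.condKernel.reweight_apply hr]
  exact ofReal_tvDist_withDensity_inv_mul_le _ hr hx_top hx₀ hx_top

end MeasureTheory.Measure

namespace ProbabilityTheory

variable {Ω β 𝒲 : Type*} {mΩ : MeasurableSpace Ω} [mβ : MeasurableSpace β] [MeasurableSpace 𝒲]
  [StandardBorelSpace 𝒲] [Nonempty 𝒲] (μ : Measure Ω) [IsFiniteMeasure μ]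
  {W : Ω → 𝒲} {X : Ω → β} {r : 𝒲 → ℝ≥0∞} [IsFiniteMeasure (μ.withDensity fun ω => r (W ω))]

lemma eLpNorm_condExp_sub_eq_lintegral_condKernel (hW : Measurable W) (hX : Measurable X)
    (hr : Measurable r) :
    eLpNorm (μ[fun ω => (r (W ω)).toReal | mβ.comap X] - fun ω => (r (W ω)).toReal) 1 μ
      = ∫⁻ p, ‖(r p.2).toReal
          - (∫⁻ v, r v ∂(μ.map fun ω => (X ω, W ω)).condKernel p.1).toReal‖ₑ
          ∂(μ.map fun ω => (X ω, W ω)) := by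
  set ρ := μ.map fun ω => (X ω, W ω)
  have := Measure.isFiniteMeasure_map_withDensity (f := fun p : β × 𝒲 => r p.2) μ
    (hX.prodMk hW) (hr.comp measurable_snd)
  have hint := integrable_toReal_of_isFiniteMeasure_withDensity (f := fun ω => r (W ω)) μ
    (hr.comp hW).aemeasurable
  have hmean : ∀ᵐ ω ∂μ, (∫⁻ v, r v ∂ρ.condKernel (X ω)).toReal
      = ∫ w, (r w).toReal ∂ρ.condKernel (X ω) := by
    refine ae_of_ae_map (p := fun x => (∫⁻ v, r v ∂ρ.condKernel x).toReal
      = ∫ w, (r w).toReal ∂ρ.condKernel x) hX.aemeasurable ?_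
    rw [← Measure.fst_map_prodMk hW]
    filter_upwards [ρ.ae_lintegral_condKernel_ne_top hr] with x hx
    rw [integral_toReal hr.aemeasurable (ae_lt_top hr hx)]
  rw [eLpNorm_one_eq_lintegral_enorm,
    lintegral_map (ρ.condKernel.measurable_enorm_toReal_sub_lintegral hr) (hX.prodMk hW)]
  refine lintegral_congr_ae ?_
  filter_upwards [hmean, condExp_ae_eq_integral_condDistrib hX hW.aemeasurable
    hr.ennreal_toReal.stronglyMeasurable hint] with ω hω hcond
  rw [condDistrib_def] at hcond
  rw [Pi.sub_apply, hcond, ← hω, enorm_sub_rev]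

theorem integral_tvDist_condDistrib_withDensity_le (hW : Measurable W) (hX : Measurable X)
    (hr : Measurable r) :
    ∫ ω, tvDist (condDistrib W X (μ.withDensity fun ω => r (W ω)) (X ω)) (condDistrib W X μ (X ω))
        ∂(μ.withDensity fun ω => r (W ω))
      ≤ (eLpNorm (μ[fun ω => (r (W ω)).toReal | mβ.comap X] - fun ω => (r (W ω)).toReal)
          1 μ).toReal := by
  set μr := μ.withDensity fun ω => r (W ω)
  set ρ := μ.map fun ω => (X ω, W ω)
  have hρr : μr.map (fun ω => (X ω, W ω)) = ρ.withDensity fun p => r p.2 :=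
    Measure.map_withDensity_comp (f := fun p : β × 𝒲 => r p.2) μ (hX.prodMk hW)
      (hr.comp measurable_snd)
  have := Measure.isFiniteMeasure_map_withDensity (f := fun p : β × 𝒲 => r p.2) μ
    (hX.prodMk hW) (hr.comp measurable_snd)
  have hpost : condDistrib W X μr = (ρ.withDensity fun p => r p.2).condKernel := by
    rw [condDistrib_def]
    congr
  set ψ : β → ℝ≥0∞ := fun x => (∫⁻ w, r w ∂ρ.condKernel x)⁻¹
    * ∫⁻ w, ‖(r w).toReal - (∫⁻ v, r v ∂ρ.condKernel x).toReal‖ₑ ∂ρ.condKernel x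
  have hψ : Measurable ψ := hr.lintegral_kernel.inv.mul
    (ρ.condKernel.measurable_enorm_toReal_sub_lintegral hr).lintegral_kernel_prod_right
  have hbound : ∀ᵐ ω ∂μr,
      ENNReal.ofReal (tvDist (condDistrib W X μr (X ω)) (condDistrib W X μ (X ω))) ≤ ψ (X ω) := by
    rw [hpost, condDistrib_def]
    refine ae_of_ae_map (p := fun x => ENNReal.ofReal (tvDist
      ((ρ.withDensity fun p => r p.2).condKernel x) (ρ.condKernel x)) ≤ ψ x) hX.aemeasurable ?_
    rw [← Measure.fst_map_prodMk hW, hρr]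
    exact ρ.ae_ofReal_tvDist_condKernel_withDensity_snd_le hr
  have hint := integrable_toReal_of_isFiniteMeasure_withDensity (f := fun ω => r (W ω)) μ
    (hr.comp hW).aemeasurable
  rw [← ENNReal.ofReal_le_iff_le_toReal
    (memLp_one_iff_integrable.2 (integrable_condExp.sub hint)).eLpNorm_ne_top]
  calc ENNReal.ofReal (∫ ω, tvDist (condDistrib W X μr (X ω)) (condDistrib W X μ (X ω)) ∂μr)
      ≤ ∫⁻ ω, ‖tvDist (condDistrib W X μr (X ω)) (condDistrib W X μ (X ω))‖ₑ ∂μr :=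
        (Real.ofReal_le_enorm _).trans (enorm_integral_le_lintegral_enorm _)
    _ ≤ ∫⁻ ω, ψ (X ω) ∂μr := by
        refine lintegral_mono_ae (hbound.mono fun ω hω => ?_)
        rwa [Real.enorm_of_nonneg (tvDist_nonneg _ _)]
    _ = ∫⁻ x, ψ x ∂(ρ.withDensity fun p => r p.2).fst := by
        rw [← hρr, Measure.fst_map_prodMk hW, lintegral_map hψ hX]
    _ ≤ _ := ρ.lintegral_fst_withDensity_snd_le hr
    _ = _ := (eLpNorm_condExp_sub_eq_lintegral_condKernel μ hW hX hr).symm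

end ProbabilityTheory

namespace MeasureTheory

variable {Ω : Type*} {m0 : MeasurableSpace Ω}

lemma Integrable.tendsto_eLpNorm_condExp_of_aestronglyMeasurable {μ : Measure Ω}
    [IsFiniteMeasure μ] {ℱ : Filtration ℕ m0} {g : Ω → ℝ} (hg : Integrable g μ)
    (hgm : AEStronglyMeasurable[⨆ n, ℱ n] g μ) :
    Tendsto (fun n => eLpNorm (μ[g|ℱ n] - g) 1 μ) atTop (nhds 0) := by
  obtain ⟨g', hg'm, hgg'⟩ := hgm
  refine ((hg.congr hgg').tendsto_eLpNorm_condExp hg'm).congr fun n => eLpNorm_congr_ae ?_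
  exact (condExp_congr_ae hgg').symm.sub hgg'.symm

variable {𝒴 : Type*} [MeasurableSpace 𝒴]

/-- Time `n` carries `σ(Y 0, …, Y (n - 1))`, the paper's `ℱ^Y_{1:n}`. -/
def prefixFiltration (Y : ℕ → Ω → 𝒴) (hY : ∀ n, Measurable (Y n)) : Filtration ℕ m0 where
  seq n := MeasurableSpace.comap (fun ω (i : Fin n) => Y i ω) inferInstance
  mono' n k hnk := Measurable.comap_le (f := fun ω (i : Fin n) => Y i ω) <|
    (measurable_pi_lambda (fun (v : Fin k → 𝒴) (i : Fin n) => v (Fin.castLE hnk i))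
      fun i => measurable_pi_apply (Fin.castLE hnk i)).comp
        (comap_measurable fun ω (i : Fin k) => Y i ω)
  le' n := (measurable_pi_lambda (fun ω (i : Fin n) => Y i ω) fun i => hY i).comap_le

lemma iSup_comap_le_iSup_prefixFiltration (Y : ℕ → Ω → 𝒴) (hY : ∀ n, Measurable (Y n)) :
    ⨆ n, MeasurableSpace.comap (Y n) inferInstance ≤ ⨆ n, prefixFiltration Y hY n :=
  iSup_le fun n => le_iSup_of_le (n + 1) <| Measurable.comap_le (f := Y n) <|
    (measurable_pi_apply (Fin.last n)).comp (comap_measurable fun ω (i : Fin (n + 1)) => Y i ω)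

end MeasureTheory

theorem reliable_implies_posterior_merging_general
    {Ω 𝒲 𝒴 : Type*} {mΩ : MeasurableSpace Ω} [MeasurableSpace 𝒲] [StandardBorelSpace 𝒲]
    [Nonempty 𝒲] [MeasurableSpace 𝒴]
    (μbar : Measure Ω) [IsProbabilityMeasure μbar]
    (W : Ω → 𝒲) (hW : Measurable W)
    (Y : ℕ → Ω → 𝒴) (hY : ∀ n, Measurable (Y n))
    -- reliability: `W` is `μbar`-a.s. measurable with respect to `ℱ^Y_{1:∞} = ⨆ n, σ(Y n)`
    (hreliable : ∃ W' : Ω → 𝒲,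
      Measurable[⨆ n, MeasurableSpace.comap (Y n) inferInstance] W' ∧ W =ᵐ[μbar] W')
    (ν νbar : Measure 𝒲)
    (μ : Measure Ω) [IsProbabilityMeasure μ]
    (hμ : μ = μbar.withDensity (fun ω => ν.rnDeriv νbar (W ω))) :
    Tendsto (fun n =>
      ∫ ω, tvDist
        ((condDistrib W (fun ω' (i : Fin n) => Y i ω') μ) (fun i : Fin n => Y i ω))
        ((condDistrib W (fun ω' (i : Fin n) => Y i ω') μbar) (fun i : Fin n => Y i ω)) ∂μ)
      atTop (nhds 0) := by
  subst hμ
  obtain ⟨W', hW'm, hWW'⟩ := hreliable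
  have hr := ν.measurable_rnDeriv νbar
  have hint := integrable_toReal_of_isFiniteMeasure_withDensity
    (f := fun ω => ν.rnDeriv νbar (W ω)) μbar (hr.comp hW).aemeasurable
  have hW'_limit : Measurable[⨆ n, prefixFiltration Y hY n] W' :=
    hW'm.mono (iSup_comap_le_iSup_prefixFiltration Y hY) le_rfl
  have hlimit : AEStronglyMeasurable[⨆ n, prefixFiltration Y hY n]
      (fun ω => (ν.rnDeriv νbar (W ω)).toReal) μbar :=
    ⟨_, (hr.ennreal_toReal.comp hW'_limit).stronglyMeasurable,
      hWW'.fun_comp fun w => (ν.rnDeriv νbar w).toReal⟩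
  refine squeeze_zero (fun n => integral_nonneg fun ω => tvDist_nonneg _ _) (fun n => ?_)
    ((ENNReal.tendsto_toReal ENNReal.zero_ne_top).comp
      (hint.tendsto_eLpNorm_condExp_of_aestronglyMeasurable hlimit))
  exact integral_tvDist_condDistrib_withDensity_le μbar hW
    (measurable_pi_lambda _ fun i => hY i) hr

/-- Theorem 1: if the scheme is reliable (`W` is `ℙ̄`-a.s. `ℱ^Y_{1:∞}`-measurable), then for any
prior `ν ≪ ν̄`, the `ν`-expected total variation distance between the posteriors of `W` given
`Y_{1:n}` under priors `ν` and `ν̄` tends to `0`. -/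
theorem reliable_implies_posterior_merging
    {Ω 𝒲 𝒴 : Type*} {mΩ : MeasurableSpace Ω} [MeasurableSpace 𝒲] [StandardBorelSpace 𝒲]
    [Nonempty 𝒲] [MeasurableSpace 𝒴]
    (μbar : Measure Ω) [IsProbabilityMeasure μbar]
    (W : Ω → 𝒲) (hW : Measurable W)
    (Y : ℕ → Ω → 𝒴) (hY : ∀ n, Measurable (Y n))
    -- reliability: `W` is `μbar`-a.s. measurable with respect to `ℱ^Y_{1:∞} = ⨆ n, σ(Y n)`
    (hreliable : ∃ W' : Ω → 𝒲,
      Measurable[⨆ n, MeasurableSpace.comap (Y n) inferInstance] W' ∧ W =ᵐ[μbar] W')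
    (ν νbar : Measure 𝒲) [IsProbabilityMeasure ν] [IsProbabilityMeasure νbar]
    (hac : ν ≪ νbar) (hprior : Measure.map W μbar = νbar)
    (μ : Measure Ω) [IsProbabilityMeasure μ]
    (hμ : μ = μbar.withDensity (fun ω => ν.rnDeriv νbar (W ω))) :
    Tendsto (fun n =>
      ∫ ω, tvDist
        ((condDistrib W (fun ω' (i : Fin n) => Y i ω') μ) (fun i : Fin n => Y i ω))
        ((condDistrib W (fun ω' (i : Fin n) => Y i ω') μbar) (fun i : Fin n => Y i ω)) ∂μ)
      atTop (nhds 0) :=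
  reliable_implies_posterior_merging_general (mΩ := mΩ) μbar W hW Y hY hreliable ν νbar μ hμ
end

section
/- Let $(V_n)_{n\geq 1}$ be a time-homogeneous Markov chain with invariant distribution $\bar{\nu}$, stationary under $\overline{\mathbb{P}}$. If for every probability measure $\nu \ll \bar{\nu}$, the law $\mathbb{P}_\nu(V_n \in \cdot)$ of the chain started from $\nu$ converges in total variation to $\bar{\nu}$, then the stationary chain $(V_n)$ is $\overline{\mathbb{P}}$-ergodic (its tail sigma-algebra is $\overline{\mathbb{P}}$-trivial). -/
/-!
For a tail event `E` let `ψₙ x = P(E | Vₙ = x)`, the version given by `condDistrib`. Since `E` lies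
in the future of time `n + 1`, the Markov property makes `(ψₙ)` space-time harmonic:
`ψₙ = κ ψₙ₊₁` `ν̄`-a.e. Therefore `∫ ψₙ dρ = ∫ ψₙ₊ₘ d(ρκᵐ)` for every `ρ ≪ ν̄`, and as `ρκᵐ → ν̄` in
total variation this equals `∫ ψₙ dν̄ = P(E)`. Testing with `ρ = ν̄(· | A)` shows that `ψₙ` is
`ν̄`-a.e. the constant `P(E)`. The Markov property at time `n` then makes `E` independent of
`σ(V₀, …, Vₙ)` for every `n`, hence of `σ(V)`, which contains `E`; so `P(E) = P(E)²`.
-/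

open MeasureTheory ProbabilityTheory Filter

/-- The tail σ-algebra `𝓣_V = ⋂ n σ(V_{n:∞})` of a process. -/
def tailSigma {Ω 𝒱 : Type*} [MeasurableSpace 𝒱] (V : ℕ → Ω → 𝒱) : MeasurableSpace Ω :=
  ⨅ n, ⨆ k, MeasurableSpace.comap (V (n + k)) inferInstance

/-- The law at time `n` of the Markov chain with transition kernel `κ` started from `ν`. -/
noncomputable def chainLaw {𝒱 : Type*} [MeasurableSpace 𝒱] (κ : Kernel 𝒱 𝒱)
    (ν : Measure 𝒱) : ℕ → Measure 𝒱
  | 0 => ν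
  | n + 1 => (chainLaw κ ν n).bind κ

open Set
open scoped ENNReal

section TotalVariation

variable {X : Type*} [MeasurableSpace X]

lemma abs_sub_le_tvDist (P Q : Measure X) [IsFiniteMeasure P] [IsFiniteMeasure Q] {A : Set X}
    (hA : MeasurableSet A) : |(P A).toReal - (Q A).toReal| ≤ tvDist P Q := by
  refine le_ciSup
    (f := fun A : {A : Set X // MeasurableSet A} => |(P A.1).toReal - (Q A.1).toReal|)
    ⟨(P univ).toReal + (Q univ).toReal, ?_⟩ ⟨A, hA⟩
  rintro x ⟨B, rfl⟩
  refine (abs_sub _ _).trans (add_le_add ?_ ?_) <;>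
  · rw [abs_of_nonneg ENNReal.toReal_nonneg]
    exact ENNReal.toReal_mono (measure_ne_top _ _) (measure_mono (subset_univ _))

lemma integral_eq_integral_Ioc_measureReal_lt (P : Measure X) [IsFiniteMeasure P] {f : X → ℝ}
    (hf : Measurable f) (h0 : ∀ x, 0 ≤ f x) (h1 : ∀ x, f x ≤ 1) :
    ∫ x, f x ∂P = ∫ t in Ioc 0 1, P.real {x | t < f x} := by
  have hint : Integrable f P :=
    (integrable_const (1 : ℝ)).mono' hf.aestronglyMeasurable
      (Eventually.of_forall fun x => by simpa [abs_of_nonneg (h0 x)] using h1 x)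
  rw [hint.integral_eq_integral_meas_lt (Eventually.of_forall h0)]
  refine setIntegral_eq_of_subset_of_forall_sdiff_eq_zero measurableSet_Ioi Ioc_subset_Ioi_self
    fun t ht => ?_
  have ht1 : 1 < t := by
    simp only [Set.mem_sdiff, mem_Ioi, mem_Ioc, not_and, not_le] at ht
    exact ht.2 ht.1
  simp [fun x => not_lt.2 ((h1 x).trans ht1.le)]

lemma abs_integral_sub_le_tvDist (P Q : Measure X) [IsFiniteMeasure P] [IsFiniteMeasure Q]
    {f : X → ℝ} (hf : Measurable f) (h0 : ∀ x, 0 ≤ f x) (h1 : ∀ x, f x ≤ 1) :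
    |∫ x, f x ∂P - ∫ x, f x ∂Q| ≤ tvDist P Q := by
  have hlayer : ∀ (m : Measure X) [IsFiniteMeasure m],
      IntegrableOn (fun t => m.real {x | t < f x}) (Ioc 0 1) := by
    intro m _
    have hanti : Antitone fun t => m.real {x | t < f x} :=
      fun s t hst => measureReal_mono fun x hx => lt_of_le_of_lt hst hx
    refine Integrable.mono' (g := fun _ => m.real univ) (integrableOn_const measure_Ioc_lt_top.ne)
      hanti.measurable.aestronglyMeasurable (Eventually.of_forall fun t => ?_)
    rw [Real.norm_eq_abs, abs_of_nonneg measureReal_nonneg]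
    exact measureReal_mono (subset_univ _)
  rw [integral_eq_integral_Ioc_measureReal_lt P hf h0 h1,
    integral_eq_integral_Ioc_measureReal_lt Q hf h0 h1, ← integral_sub (hlayer P) (hlayer Q)]
  calc |∫ t in Ioc (0 : ℝ) 1, (P.real {x | t < f x} - Q.real {x | t < f x})|
      ≤ ∫ t in Ioc (0 : ℝ) 1, |P.real {x | t < f x} - Q.real {x | t < f x}| :=
        abs_integral_le_integral_abs
    _ ≤ ∫ _ in Ioc (0 : ℝ) 1, tvDist P Q :=
        setIntegral_mono_on ((hlayer P).sub (hlayer Q)).abs (integrableOn_const (by simp))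
          measurableSet_Ioc fun t _ => abs_sub_le_tvDist P Q (measurableSet_lt measurable_const hf)
    _ = tvDist P Q := by simp

lemma abs_lintegral_sub_le_tvDist (P Q : Measure X) [IsFiniteMeasure P] [IsFiniteMeasure Q]
    {f : X → ℝ≥0∞} (hf : Measurable f) (h1 : ∀ x, f x ≤ 1) :
    |(∫⁻ x, f x ∂P).toReal - (∫⁻ x, f x ∂Q).toReal| ≤ tvDist P Q := by
  have hfin : ∀ x, f x < ∞ := fun x => (h1 x).trans_lt ENNReal.one_lt_top
  rw [← integral_toReal hf.aemeasurable (Eventually.of_forall hfin),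
    ← integral_toReal hf.aemeasurable (Eventually.of_forall hfin)]
  exact abs_integral_sub_le_tvDist P Q hf.ennreal_toReal (fun _ => ENNReal.toReal_nonneg)
    fun x => ENNReal.toReal_le_of_le_ofReal zero_le_one (by simpa using h1 x)

end TotalVariation

section MarkovChain

variable {𝒱 : Type*} [MeasurableSpace 𝒱] {κ : Kernel 𝒱 𝒱} {νbar : Measure 𝒱}

instance isProbabilityMeasure_chainLaw [IsMarkovKernel κ] (ν : Measure 𝒱)
    [IsProbabilityMeasure ν] (n : ℕ) : IsProbabilityMeasure (chainLaw κ ν n) := by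
  induction n with
  | zero => exact ‹_›
  | succ n ih => rw [chainLaw]; infer_instance

lemma chainLaw_eq_self_of_bind_eq (hinv : νbar.bind κ = νbar) (n : ℕ) :
    chainLaw κ νbar n = νbar := by
  induction n with
  | zero => rfl
  | succ n ih => rw [chainLaw, ih, hinv]

lemma chainLaw_absolutelyContinuous (hinv : νbar.bind κ = νbar) {ν : Measure 𝒱} (hν : ν ≪ νbar) :
    ∀ n, chainLaw κ ν n ≪ νbar
  | 0 => hν
  | n + 1 => hinv ▸ (chainLaw_absolutelyContinuous hinv hν n).comp_right κ

lemma ae_eq_lintegral_of_forall_lintegral_eq [IsFiniteMeasure νbar] {f : 𝒱 → ℝ≥0∞}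
    (hf : Measurable f)
    (h : ∀ ρ : Measure 𝒱, IsProbabilityMeasure ρ → ρ ≪ νbar → ∫⁻ x, f x ∂ρ = ∫⁻ x, f x ∂νbar) :
    f =ᵐ[νbar] fun _ => ∫⁻ x, f x ∂νbar := by
  refine ae_eq_of_forall_setLIntegral_eq_of_sigmaFinite hf measurable_const fun A hA _ => ?_
  rw [setLIntegral_const]
  rcases eq_or_ne (νbar A) 0 with hA0 | hA0
  · rw [setLIntegral_measure_zero _ _ hA0, hA0, mul_zero]
  have hcond := h _ (cond_isProbabilityMeasure hA0) cond_absolutelyContinuous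
  rw [ProbabilityTheory.cond, lintegral_smul_measure, smul_eq_mul] at hcond
  rw [← hcond, mul_comm, ← mul_assoc, ENNReal.mul_inv_cancel hA0 (measure_ne_top _ _), one_mul]

def IsSpaceTimeHarmonic (κ : Kernel 𝒱 𝒱) (νbar : Measure 𝒱) (h : ℕ → 𝒱 → ℝ≥0∞) : Prop :=
  ∀ n, h n =ᵐ[νbar] fun x => ∫⁻ y, h (n + 1) y ∂κ x

namespace IsSpaceTimeHarmonic

variable {h : ℕ → 𝒱 → ℝ≥0∞}

lemma lintegral_chainLaw (hh : IsSpaceTimeHarmonic κ νbar h) (hmeas : ∀ n, Measurable (h n))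
    (hinv : νbar.bind κ = νbar) {ρ : Measure 𝒱} (hρ : ρ ≪ νbar) (n m : ℕ) :
    ∫⁻ x, h (n + m) x ∂chainLaw κ ρ m = ∫⁻ x, h n x ∂ρ := by
  induction m with
  | zero => rfl
  | succ m ih =>
    rw [chainLaw, Measure.lintegral_bind κ.aemeasurable (hmeas _).aemeasurable, ← ih,
      ← add_assoc]
    exact lintegral_congr_ae ((chainLaw_absolutelyContinuous hinv hρ m).ae_eq (hh (n + m))).symm

lemma lintegral_eq_of_tendsto_tvDist [IsMarkovKernel κ] [IsProbabilityMeasure νbar]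
    (hh : IsSpaceTimeHarmonic κ νbar h) (hmeas : ∀ n, Measurable (h n)) (hle : ∀ n x, h n x ≤ 1)
    (hinv : νbar.bind κ = νbar) {ρ : Measure 𝒱} [IsProbabilityMeasure ρ] (hρ : ρ ≪ νbar)
    (htv : Tendsto (fun m => tvDist (chainLaw κ ρ m) νbar) atTop (nhds 0)) (n : ℕ) :
    ∫⁻ x, h n x ∂ρ = ∫⁻ x, h n x ∂νbar := by
  have hdist : ∀ m, |(∫⁻ x, h n x ∂ρ).toReal - (∫⁻ x, h n x ∂νbar).toReal|
      ≤ tvDist (chainLaw κ ρ m) νbar := fun m => by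
    rw [← hh.lintegral_chainLaw hmeas hinv hρ n m,
      ← hh.lintegral_chainLaw hmeas hinv Measure.AbsolutelyContinuous.rfl n m,
      chainLaw_eq_self_of_bind_eq hinv]
    exact abs_lintegral_sub_le_tvDist _ _ (hmeas _) (hle _)
  have hfin : ∀ (P : Measure 𝒱) [IsProbabilityMeasure P], ∫⁻ x, h n x ∂P ≠ ∞ := fun P _ =>
    ((lintegral_mono (hle n)).trans_lt (by simp)).ne
  rw [← ENNReal.toReal_eq_toReal_iff' (hfin ρ) (hfin νbar), ← sub_eq_zero, ← abs_nonpos_iff]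
  exact ge_of_tendsto' htv hdist

lemma ae_eq_lintegral [IsMarkovKernel κ] [IsProbabilityMeasure νbar]
    (hh : IsSpaceTimeHarmonic κ νbar h) (hmeas : ∀ n, Measurable (h n)) (hle : ∀ n x, h n x ≤ 1)
    (hinv : νbar.bind κ = νbar)
    (htv : ∀ ρ : Measure 𝒱, IsProbabilityMeasure ρ → ρ ≪ νbar →
      Tendsto (fun m => tvDist (chainLaw κ ρ m) νbar) atTop (nhds 0)) (n : ℕ) :
    h n =ᵐ[νbar] fun _ => ∫⁻ x, h n x ∂νbar :=
  ae_eq_lintegral_of_forall_lintegral_eq (hmeas n) fun ρ _ hρ =>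
    hh.lintegral_eq_of_tendsto_tvDist hmeas hle hinv hρ (htv ρ ‹_› hρ) n

end IsSpaceTimeHarmonic

end MarkovChain

lemma ProbabilityTheory.CondIndep.measureReal_inter_inter_eq_setIntegral_condExp {Ω : Type*}
    {m' m₁ m₂ mΩ : MeasurableSpace Ω} [StandardBorelSpace Ω] {hm' : m' ≤ mΩ}
    {μ : Measure Ω} [IsFiniteMeasure μ] (h : CondIndep m' m₁ m₂ hm' μ) (hm₁ : m₁ ≤ mΩ)
    (hm₂ : m₂ ≤ mΩ) {s t₁ t₂ : Set Ω} (hs : MeasurableSet[m'] s) (ht₁ : MeasurableSet[m₁] t₁)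
    (ht₂ : MeasurableSet[m₂] t₂) :
    μ.real (s ∩ t₁ ∩ t₂) = ∫ ω in s ∩ t₁, (μ⟦t₂ | m'⟧) ω ∂μ := by
  have hind : ∀ {t}, MeasurableSet t → Integrable (t.indicator fun _ => (1 : ℝ)) μ :=
    fun ht => (integrable_const 1).indicator ht
  have hprod : μ⟦t₂ | m'⟧ * t₁.indicator (fun _ => (1 : ℝ)) = t₁.indicator (μ⟦t₂ | m'⟧) := by
    ext ω
    by_cases hω : ω ∈ t₁ <;> simp [hω]
  have hint : Integrable (μ⟦t₂ | m'⟧ * t₁.indicator (fun _ => (1 : ℝ))) μ :=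
    hprod ▸ integrable_condExp.indicator (hm₁ _ ht₁)
  calc μ.real (s ∩ t₁ ∩ t₂) = ∫ ω in s, (t₁ ∩ t₂).indicator (fun _ => (1 : ℝ)) ω ∂μ := by
        rw [setIntegral_indicator ((hm₁ _ ht₁).inter (hm₂ _ ht₂)), setIntegral_const,
          smul_eq_mul, mul_one, inter_assoc]
    _ = ∫ ω in s, (μ⟦t₁ ∩ t₂ | m'⟧) ω ∂μ :=
        (setIntegral_condExp hm' (hind ((hm₁ _ ht₁).inter (hm₂ _ ht₂))) hs).symm
    _ = ∫ ω in s, (μ[μ⟦t₂ | m'⟧ * t₁.indicator (fun _ => (1 : ℝ)) | m']) ω ∂μ := by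
        refine setIntegral_congr_ae (hm' _ hs) ?_
        filter_upwards [(condIndep_iff m' m₁ m₂ hm' hm₁ hm₂ μ).1 h t₁ t₂ ht₁ ht₂,
          condExp_mul_of_stronglyMeasurable_left stronglyMeasurable_condExp hint
            (hind (hm₁ _ ht₁))] with ω hindep hpull _
        rw [hindep, hpull, Pi.mul_apply, Pi.mul_apply, mul_comm]
    _ = ∫ ω in s ∩ t₁, (μ⟦t₂ | m'⟧) ω ∂μ := by
        rw [setIntegral_condExp hm' hint hs, hprod, setIntegral_indicator (hm₁ _ ht₁)]

section ConditionalDistribution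

variable {Ω 𝒱 : Type*} {m₁ m₂ mΩ : MeasurableSpace Ω} [StandardBorelSpace Ω] [Nonempty Ω]
  [MeasurableSpace 𝒱] {μ : Measure Ω} [IsFiniteMeasure μ] {X : Ω → 𝒱} {E : Set Ω}

lemma setLIntegral_condDistrib_id_map (hX : Measurable X) (hE : MeasurableSet E) {A : Set 𝒱}
    (hA : MeasurableSet A) :
    ∫⁻ x in A, condDistrib id X μ x E ∂μ.map X = μ (X ⁻¹' A ∩ E) := by
  rw [setLIntegral_map hA (Kernel.measurable_coe _ hE) hX]
  exact setLIntegral_preimage_condDistrib hX aemeasurable_id hE hA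

lemma ProbabilityTheory.CondIndep.measure_inter_inter_eq_setLIntegral_condDistrib
    (hX : Measurable X) (h : CondIndep (MeasurableSpace.comap X inferInstance) m₁ m₂ hX.comap_le μ)
    (hm₁ : m₁ ≤ mΩ) (hm₂ : m₂ ≤ mΩ) {s t : Set Ω}
    (hs : MeasurableSet[MeasurableSpace.comap X inferInstance] s) (ht : MeasurableSet[m₁] t)
    (hE : MeasurableSet[m₂] E) :
    μ (s ∩ t ∩ E) = ∫⁻ ω in s ∩ t, condDistrib id X μ (X ω) E ∂μ := by
  have hfin : ∫⁻ ω in s ∩ t, condDistrib id X μ (X ω) E ∂μ ≠ ∞ :=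
    ((lintegral_mono fun _ => prob_le_one).trans_lt (by simp)).ne
  rw [← ENNReal.toReal_eq_toReal_iff' (measure_ne_top _ _) hfin, ← measureReal_def,
    h.measureReal_inter_inter_eq_setIntegral_condExp hm₁ hm₂ hs ht hE,
    ← integral_toReal (f := fun ω => condDistrib id X μ (X ω) E)
      ((Kernel.measurable_coe _ (hm₂ _ hE)).comp hX).aemeasurable
      (Eventually.of_forall fun _ => measure_lt_top _ _)]
  refine setIntegral_congr_ae ((hX.comap_le _ hs).inter (hm₁ _ ht)) ?_
  filter_upwards [condDistrib_ae_eq_condExp (μ := μ) hX measurable_id (hm₂ _ hE)] with ω hω _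
  exact hω.symm

end ConditionalDistribution

lemma setLIntegral_comp_of_map_prodMk_eq_compProd {Ω α β : Type*} {mΩ : MeasurableSpace Ω}
    [MeasurableSpace α] [MeasurableSpace β] {μ : Measure Ω} {X : Ω → α} {Y : Ω → β}
    (hX : Measurable X) (hY : Measurable Y) {ν : Measure α} [SFinite ν] {κ : Kernel α β}
    [IsSFiniteKernel κ] (hXY : μ.map (fun ω => (X ω, Y ω)) = ν.compProd κ) {f : β → ℝ≥0∞}
    (hf : Measurable f) {A : Set α} (hA : MeasurableSet A) :
    ∫⁻ ω in X ⁻¹' A, f (Y ω) ∂μ = ∫⁻ x in A, ∫⁻ y, f y ∂κ x ∂ν := by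
  have h := setLIntegral_map (μ := μ) (hA.prod MeasurableSet.univ) (hf.comp measurable_snd)
    (hX.prodMk hY)
  rw [hXY, Measure.setLIntegral_compProd (hf.comp measurable_snd) hA MeasurableSet.univ] at h
  simpa [mk_preimage_prod] using h.symm

section MarkovProperty

variable {Ω 𝒱 : Type*} {mΩ : MeasurableSpace Ω} [MeasurableSpace 𝒱] {V : ℕ → Ω → 𝒱}

lemma eq_univ_or_eq_preimage_inter_of_mem_piiUnionInter {t : Set Ω}
    (ht : t ∈ piiUnionInter
      (fun n => {s | MeasurableSet[MeasurableSpace.comap (V n) inferInstance] s}) univ) :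
    t = univ ∨ ∃ n, ∃ A : Set 𝒱, MeasurableSet A ∧ ∃ s,
      MeasurableSet[⨆ i : Fin n, MeasurableSpace.comap (V i) inferInstance] s ∧
      t = V n ⁻¹' A ∩ s := by
  obtain ⟨u, -, f, hf, rfl⟩ := ht
  rcases u.eq_empty_or_nonempty with rfl | hu
  · simp
  set n := u.max' hu
  obtain ⟨A, hA, hfn⟩ := hf n (u.max'_mem hu)
  refine Or.inr ⟨n, A, hA, ⋂ i ∈ u.erase n, f i, ?_, ?_⟩
  · refine MeasurableSet.biInter (u.erase n).countable_toSet fun i hi => ?_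
    have hin : i < n := lt_of_le_of_ne (u.le_max' i (Finset.mem_of_mem_erase hi))
      (Finset.ne_of_mem_erase hi)
    exact le_iSup (fun i : Fin n => MeasurableSpace.comap (V i) inferInstance) ⟨i, hin⟩ _
      (hf i (Finset.mem_of_mem_erase hi))
  · conv_lhs => rw [← Finset.insert_erase (u.max'_mem hu)]
    rw [Finset.set_biInter_insert, hfn]

lemma measurableSet_iSup_comap_of_tailSigma {E : Set Ω} (hE : MeasurableSet[tailSigma V] E)
    (n : ℕ) : MeasurableSet[⨆ k, MeasurableSpace.comap (V (n + k)) inferInstance] E :=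
  iInf_le (fun n => ⨆ k, MeasurableSpace.comap (V (n + k)) inferInstance) n E hE

lemma tailSigma_le_iSup_comap : tailSigma V ≤ ⨆ i, MeasurableSpace.comap (V i) inferInstance :=
  (iInf_le _ 0).trans
    (iSup_le fun k => le_iSup (fun i => MeasurableSpace.comap (V i) inferInstance) (0 + k))

variable [StandardBorelSpace Ω] [Nonempty Ω] {μ : Measure Ω} (hV : ∀ n, Measurable (V n))

lemma isSpaceTimeHarmonic_condDistrib [IsFiniteMeasure μ] {κ : Kernel 𝒱 𝒱} [IsSFiniteKernel κ]
    {νbar : Measure 𝒱} [IsFiniteMeasure νbar] (hmarg : ∀ n, μ.map (V n) = νbar)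
    (hjoint : ∀ n, μ.map (fun ω => (V n ω, V (n + 1) ω)) = νbar.compProd κ)
    (hMarkov : ∀ n, CondIndep (MeasurableSpace.comap (V n) inferInstance)
      (⨆ i : Fin n, MeasurableSpace.comap (V i) inferInstance)
      (⨆ k, MeasurableSpace.comap (V (n + 1 + k)) inferInstance) (hV n).comap_le μ)
    {E : Set Ω} (hE : MeasurableSet[tailSigma V] E) :
    IsSpaceTimeHarmonic κ νbar fun n x => condDistrib id (V n) μ x E := by
  have hfuture := measurableSet_iSup_comap_of_tailSigma hE
  have hEm : MeasurableSet E := iSup_le (fun k => (hV _).comap_le) _ (hfuture 0)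
  have hψ : ∀ m, Measurable fun x => condDistrib id (V m) μ x E :=
    fun m => Kernel.measurable_coe _ hEm
  intro n
  refine ae_eq_of_forall_setLIntegral_eq_of_sigmaFinite (hψ n) (hψ (n + 1)).lintegral_kernel
    fun A hA _ => ?_
  have hpast : MeasurableSet[⨆ i : Fin (n + 1), MeasurableSpace.comap (V i) inferInstance]
      (V n ⁻¹' A) :=
    le_iSup (fun i : Fin (n + 1) => MeasurableSpace.comap (V i) inferInstance) (Fin.last n) _
      ⟨A, hA, rfl⟩
  calc ∫⁻ x in A, condDistrib id (V n) μ x E ∂νbar = μ (univ ∩ V n ⁻¹' A ∩ E) := by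
        rw [← hmarg n, univ_inter, setLIntegral_condDistrib_id_map (hV n) hEm hA]
    _ = ∫⁻ ω in univ ∩ V n ⁻¹' A, condDistrib id (V (n + 1)) μ (V (n + 1) ω) E ∂μ :=
        (hMarkov (n + 1)).measure_inter_inter_eq_setLIntegral_condDistrib (hV _)
          (iSup_le fun i => (hV i).comap_le) (iSup_le fun k => (hV _).comap_le)
          MeasurableSet.univ hpast (hfuture (n + 1 + 1))
    _ = ∫⁻ x in A, ∫⁻ y, condDistrib id (V (n + 1)) μ y E ∂κ x ∂νbar := by
        rw [univ_inter]
        exact setLIntegral_comp_of_map_prodMk_eq_compProd (hV n) (hV (n + 1)) (hjoint n) (hψ _) hA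

lemma indep_iSup_comap_of_condDistrib_ae_eq_const [IsProbabilityMeasure μ]
    (hMarkov : ∀ n, CondIndep (MeasurableSpace.comap (V n) inferInstance)
      (⨆ i : Fin n, MeasurableSpace.comap (V i) inferInstance)
      (⨆ k, MeasurableSpace.comap (V (n + 1 + k)) inferInstance) (hV n).comap_le μ)
    {E : Set Ω} (hE : MeasurableSet[tailSigma V] E)
    (hconst : ∀ n, (fun x => condDistrib id (V n) μ x E) =ᵐ[μ.map (V n)] fun _ => μ E) :
    Indep (MeasurableSpace.generateFrom {E}) (⨆ i, MeasurableSpace.comap (V i) inferInstance)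
      μ := by
  have hfuture := measurableSet_iSup_comap_of_tailSigma hE
  have hEm : MeasurableSet E := iSup_le (fun k => (hV _).comap_le) _ (hfuture 0)
  set mV : ℕ → MeasurableSpace Ω := fun n => MeasurableSpace.comap (V n) inferInstance
  refine IndepSets.indep (MeasurableSpace.generateFrom_singleton_le hEm)
    (iSup_le fun i => (hV i).comap_le) (IsPiSystem.singleton E)
    (isPiSystem_piiUnionInter _ (fun n => @MeasurableSpace.isPiSystem_measurableSet Ω (mV n)) univ)
    rfl (by rw [generateFrom_piiUnionInter_measurableSet mV univ, iSup_univ]) ?_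
  rw [IndepSets_iff]
  intro s t hs ht
  rw [mem_singleton_iff.1 hs]
  rcases eq_univ_or_eq_preimage_inter_of_mem_piiUnionInter ht with rfl | ⟨n, A, hA, s₁, hs₁, rfl⟩
  · simp
  calc μ (E ∩ (V n ⁻¹' A ∩ s₁))
        = ∫⁻ ω in V n ⁻¹' A ∩ s₁, condDistrib id (V n) μ (V n ω) E ∂μ := by
        rw [inter_comm]
        exact (hMarkov n).measure_inter_inter_eq_setLIntegral_condDistrib (hV n)
          (iSup_le fun i => (hV i).comap_le) (iSup_le fun k => (hV _).comap_le) ⟨A, hA, rfl⟩ hs₁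
          (hfuture (n + 1))
    _ = μ E * μ (V n ⁻¹' A ∩ s₁) := by
        rw [lintegral_congr_ae (ae_restrict_of_ae (ae_of_ae_map (hV n).aemeasurable (hconst n))),
          setLIntegral_const]

end MarkovProperty

theorem ergodic_of_tv_convergence_general
    {Ω 𝒱 : Type*} {mΩ : MeasurableSpace Ω} [StandardBorelSpace Ω] [Nonempty Ω]
    [MeasurableSpace 𝒱]
    (μ : Measure Ω) [IsProbabilityMeasure μ]
    (V : ℕ → Ω → 𝒱) (hV : ∀ n, Measurable (V n))
    (κ : Kernel 𝒱 𝒱) [IsMarkovKernel κ]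
    (νbar : Measure 𝒱) [IsProbabilityMeasure νbar]
    -- `νbar` is invariant for `κ`
    (hinv : νbar.bind κ = νbar)
    -- the process has one-dimensional marginals `νbar` and transitions given by `κ`
    (hmarg : ∀ n, Measure.map (V n) μ = νbar)
    (hjoint : ∀ n, Measure.map (fun ω => (V n ω, V (n + 1) ω)) μ = νbar.compProd κ)
    -- Markov property: the future is conditionally independent of the past given the present
    (hMarkov : ∀ n, CondIndep (MeasurableSpace.comap (V n) inferInstance)
      (⨆ i : Fin n, MeasurableSpace.comap (V i) inferInstance)
      (⨆ k, MeasurableSpace.comap (V (n + 1 + k)) inferInstance)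
      (measurable_iff_comap_le.mp (hV n)) μ)
    -- hypothesis (iii): total variation convergence from every `ν ≪ ν̄`
    (htv : ∀ ν : Measure 𝒱, IsProbabilityMeasure ν → ν ≪ νbar →
      Tendsto (fun n => tvDist (chainLaw κ ν n) νbar) atTop (nhds 0)) :
    ∀ E : Set Ω, MeasurableSet[tailSigma V] E → μ E = 0 ∨ μ E = 1 := by
  intro E hE
  have hEV : MeasurableSet[⨆ i, MeasurableSpace.comap (V i) inferInstance] E :=
    tailSigma_le_iSup_comap E hE
  have hEm : MeasurableSet E := iSup_le (fun i => (hV i).comap_le) _ hEV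
  have hconst : ∀ n, (fun x => condDistrib id (V n) μ x E) =ᵐ[μ.map (V n)] fun _ => μ E := by
    intro n
    have hψ := (isSpaceTimeHarmonic_condDistrib hV hmarg hjoint hMarkov hE).ae_eq_lintegral
      (fun _ => Kernel.measurable_coe _ hEm) (fun _ _ => prob_le_one) hinv htv n
    have htotal : ∫⁻ x, condDistrib id (V n) μ x E ∂μ.map (V n) = μ E := by
      simpa using setLIntegral_condDistrib_id_map (hV n) hEm MeasurableSet.univ
    rwa [← hmarg n, htotal] at hψ
  exact measure_eq_zero_or_one_of_indepSet_self (indep_of_indep_of_le_right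
    (indep_iSup_comap_of_condDistrib_ae_eq_const hV hMarkov hE hconst)
    (MeasurableSpace.generateFrom_singleton_le hEV))

/-- Lemma 8, (iii) ⇒ (i): if for every initial distribution `ν ≪ ν̄` the law of the chain at
time `n` converges in total variation to the invariant distribution `ν̄`, then the stationary
chain is ergodic (its tail σ-algebra is trivial). -/
theorem ergodic_of_tv_convergence
    {Ω 𝒱 : Type*} {mΩ : MeasurableSpace Ω} [StandardBorelSpace Ω] [Nonempty Ω]
    [MeasurableSpace 𝒱]
    (μ : Measure Ω) [IsProbabilityMeasure μ]
    (V : ℕ → Ω → 𝒱) (hV : ∀ n, Measurable (V n))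
    (κ : Kernel 𝒱 𝒱) [IsMarkovKernel κ]
    (νbar : Measure 𝒱) [IsProbabilityMeasure νbar]
    -- `νbar` is invariant for `κ`
    (hinv : νbar.bind κ = νbar)
    -- the process has one-dimensional marginals `νbar` and transitions given by `κ`
    (hmarg : ∀ n, Measure.map (V n) μ = νbar)
    (hjoint : ∀ n, Measure.map (fun ω => (V n ω, V (n + 1) ω)) μ = νbar.compProd κ)
    -- stationarity: the law of the trajectory is shift-invariant
    (hstat : ∀ m, Measure.map (fun ω (i : ℕ) => V (i + m) ω) μ
      = Measure.map (fun ω (i : ℕ) => V i ω) μ)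
    -- Markov property: the future is conditionally independent of the past given the present
    (hMarkov : ∀ n, CondIndep (MeasurableSpace.comap (V n) inferInstance)
      (⨆ i : Fin n, MeasurableSpace.comap (V i) inferInstance)
      (⨆ k, MeasurableSpace.comap (V (n + 1 + k)) inferInstance)
      (measurable_iff_comap_le.mp (hV n)) μ)
    -- hypothesis (iii): total variation convergence from every `ν ≪ ν̄`
    (htv : ∀ ν : Measure 𝒱, IsProbabilityMeasure ν → ν ≪ νbar →
      Tendsto (fun n => tvDist (chainLaw κ ν n) νbar) atTop (nhds 0)) :
    ∀ E : Set Ω, MeasurableSet[tailSigma V] E → μ E = 0 ∨ μ E = 1 :=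
  ergodic_of_tv_convergence_general (mΩ := mΩ) μ V hV κ νbar hinv hmarg hjoint hMarkov htv
end

section
/- For a posterior matching scheme (where for each $y$, $S_y$ pushes the posterior $P_{{\tilde W}_1 | Y_1 = y}$ forward to the prior $P_W$, and ${\tilde W}_{n+1} = S_{Y_n}({\tilde W}_n)$), for every $n \geq 1$ the conditional distribution of ${\tilde W}_{n+1}$ given $Y_{1:n}$ equals the unconditional prior $P_W$ almost surely; in particular, ${\tilde W}_{n+1}$ is independent of $(Y_1, \ldots, Y_n)$. -/
/-!
One channel use is a fixed measurable map `(W̃_n, N_n) ↦ (Y_n, W̃_{n+1})`, and posterior matching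
says exactly that it sends `P_W ⊗ P_N` to `P_{Y_0} ⊗ P_W`. The noise `N_n` is independent of
`σ(W, N_0, …, N_{n-1})`, which determines `(Y_{<n}, W̃_n)`. So if `W̃_n ∼ P_W` is independent of
`Y_{<n}`, then `Y_{<n}, W̃_n, N_n` are mutually independent, hence so are `Y_{<n}, Y_n, W̃_{n+1}`,
with `W̃_{n+1} ∼ P_W`; induction on `n` gives independence, and an independent variable has
constant conditional distribution.
-/

open MeasureTheory ProbabilityTheory

theorem measurable_snoc {α : Type*} [MeasurableSpace α] {n : ℕ} :
    Measurable fun p : (Fin n → α) × α => (Fin.snoc p.1 p.2 : Fin (n + 1) → α) := by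
  refine measurable_pi_lambda _ fun i => ?_
  cases i using Fin.lastCases with
  | last => simpa only [Fin.snoc_last] using measurable_snd
  | cast j =>
    simp only [Fin.snoc_castSucc]
    exact (measurable_pi_apply j).comp measurable_fst

theorem Fin.snoc_initialSegment {α : Type*} (x : ℕ → α) (n : ℕ) :
    Fin.snoc (fun i : Fin n => x i) (x n) = fun i : Fin (n + 1) => x i := by
  funext i
  cases i using Fin.lastCases <;> simp

namespace ProbabilityTheory

section Independence

variable {Ω α β γ : Type*} {mΩ : MeasurableSpace Ω} [MeasurableSpace α] [MeasurableSpace β]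
  [MeasurableSpace γ] {μ : Measure Ω} {f : Ω → α} {g : Ω → β} {h : Ω → γ}

theorem IndepFun.of_measurable_comap_left {f' : Ω → γ} (hfg : f ⟂ᵢ[μ] g)
    (hf' : Measurable[MeasurableSpace.comap f inferInstance] f') : f' ⟂ᵢ[μ] g := by
  rw [IndepFun_iff_Indep] at hfg ⊢
  exact indep_of_indep_of_le_left hfg hf'.comap_le

variable [IsFiniteMeasure μ]

theorem IndepFun.prodMk_left_of_prodMk_right (hf : Measurable f) (hg : Measurable g)
    (hh : Measurable h) (hfgh : f ⟂ᵢ[μ] fun ω => (g ω, h ω)) (hgh : g ⟂ᵢ[μ] h) :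
    (fun ω => (f ω, g ω)) ⟂ᵢ[μ] h := by
  have hfg : f ⟂ᵢ[μ] g := hfgh.comp measurable_id measurable_fst
  rw [indepFun_iff_map_prod_eq_prod_map_map (hf.prodMk hg).aemeasurable hh.aemeasurable]
  rw [indepFun_iff_map_prod_eq_prod_map_map hf.aemeasurable (hg.prodMk hh).aemeasurable] at hfgh
  rw [indepFun_iff_map_prod_eq_prod_map_map hg.aemeasurable hh.aemeasurable] at hgh
  rw [indepFun_iff_map_prod_eq_prod_map_map hf.aemeasurable hg.aemeasurable] at hfg
  calc μ.map (fun ω => ((f ω, g ω), h ω))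
      = (μ.map fun ω => (f ω, (g ω, h ω))).map MeasurableEquiv.prodAssoc.symm := by
        rw [Measure.map_map MeasurableEquiv.prodAssoc.symm.measurable
          (hf.prodMk (hg.prodMk hh))]
        rfl
    _ = ((μ.map f).prod (μ.map g)).prod (μ.map h) := by
        rw [hfgh, hgh, ← Measure.prodAssoc_prod, MeasurableEquiv.map_symm_map]
    _ = (μ.map fun ω => (f ω, g ω)).prod (μ.map h) := by rw [hfg]

theorem IndepFun.prodMk_right_of_prodMk_left (hf : Measurable f) (hg : Measurable g)
    (hh : Measurable h) (hfgh : (fun ω => (f ω, g ω)) ⟂ᵢ[μ] h) (hfg : f ⟂ᵢ[μ] g) :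
    f ⟂ᵢ[μ] fun ω => (g ω, h ω) := by
  have hhgf : h ⟂ᵢ[μ] fun ω => (g ω, f ω) := hfgh.symm.comp measurable_id measurable_swap
  exact (prodMk_left_of_prodMk_right hh hg hf hhgf hfg.symm).symm.comp measurable_id
    measurable_swap

theorem IndepFun.ae_condDistrib_apply_eq_map [StandardBorelSpace β] [Nonempty β]
    (hf : Measurable f) (hg : Measurable g) (hfg : f ⟂ᵢ[μ] g) :
    ∀ᵐ ω ∂μ, condDistrib g f μ (f ω) = μ.map g := by
  have hκ : condDistrib g f μ =ᵐ[μ.map f] Kernel.const α (μ.map g) := by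
    refine condDistrib_ae_eq_of_measure_eq_compProd_of_measurable hf hg ?_
    rw [Measure.compProd_const]
    exact (indepFun_iff_map_prod_eq_prod_map_map hf.aemeasurable hg.aemeasurable).mp hfg
  filter_upwards [ae_of_ae_map hf.aemeasurable hκ] with ω hω
  rw [hω, Kernel.const_apply]

theorem indepFun_of_map_prodMk_eq_prod (hf : Measurable f) (hg : Measurable g)
    {ν₁ : Measure α} {ν₂ : Measure β} [IsProbabilityMeasure ν₁] [IsProbabilityMeasure ν₂]
    (hfg : μ.map (fun ω => (f ω, g ω)) = ν₁.prod ν₂) :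
    f ⟂ᵢ[μ] g ∧ μ.map f = ν₁ ∧ μ.map g = ν₂ := by
  have hf₁ : μ.map f = ν₁ := by rw [← Measure.fst_map_prodMk hg, hfg, Measure.fst_prod]
  have hg₂ : μ.map g = ν₂ := by rw [← Measure.snd_map_prodMk hf, hfg, Measure.snd_prod]
  refine ⟨?_, hf₁, hg₂⟩
  rw [indepFun_iff_map_prod_eq_prod_map_map hf.aemeasurable hg.aemeasurable, hfg, hf₁, hg₂]

end Independence

theorem map_prodMk_eq_prod_of_ae_map_condDistrib_eq {Ω α β γ : Type*} {mΩ : MeasurableSpace Ω}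
    [MeasurableSpace α] [StandardBorelSpace α] [Nonempty α] [MeasurableSpace β]
    [MeasurableSpace γ] {μ : Measure Ω} [IsFiniteMeasure μ] {X : Ω → α} {Y : Ω → β}
    (hX : Measurable X) (hY : Measurable Y) {S : β → α → γ}
    (hS : Measurable fun p : β × α => S p.1 p.2) {ν : Measure γ} [SFinite ν]
    (hSν : ∀ᵐ y ∂μ.map Y, (condDistrib X Y μ y).map (S y) = ν) :
    μ.map (fun ω => (Y ω, S (Y ω) (X ω))) = (μ.map Y).prod ν := by
  have hF : Measurable fun p : β × α => (p.1, S p.1 p.2) := measurable_fst.prodMk hS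
  calc μ.map (fun ω => (Y ω, S (Y ω) (X ω)))
      = (μ.map Y ⊗ₘ condDistrib X Y μ).map fun p => (p.1, S p.1 p.2) := by
        rw [compProd_map_condDistrib hX.aemeasurable, Measure.map_map hF (hY.prodMk hX)]
        rfl
    _ = ((Kernel.id ×ₖ condDistrib X Y μ).map fun p => (p.1, S p.1 p.2)) ∘ₘ μ.map Y := by
        rw [Measure.compProd_eq_comp_prod, Measure.map_comp _ _ hF]
    _ = (Kernel.id ×ₖ Kernel.const β ν) ∘ₘ μ.map Y := by
        refine Measure.comp_congr ?_
        filter_upwards [hSν] with y hy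
        have hSy : Measurable (S y) := hS.comp measurable_prodMk_left
        rw [Kernel.map_apply _ hF, Kernel.prod_apply, Kernel.prod_apply, Kernel.id_apply,
          Kernel.const_apply, Measure.dirac_prod, Measure.dirac_prod,
          Measure.map_map hF measurable_prodMk_left, ← hy,
          Measure.map_map measurable_prodMk_left hSy]
        rfl
    _ = (μ.map Y).prod ν := by rw [← Measure.compProd_eq_comp_prod, Measure.compProd_const]

section PosteriorMatching

variable {Ω 𝒲 𝒴 𝒩 : Type*} {W : Ω → 𝒲} {N : ℕ → Ω → 𝒩} {g : 𝒲 → 𝒩 → 𝒴} {S : 𝒴 → 𝒲 → 𝒲}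
  {Wt : ℕ → Ω → 𝒲} {Y : ℕ → Ω → 𝒴}

def channelStep (g : 𝒲 → 𝒩 → 𝒴) (S : 𝒴 → 𝒲 → 𝒲) (p : 𝒲 × 𝒩) : 𝒴 × 𝒲 :=
  (g p.1 p.2, S (g p.1 p.2) p.1)

theorem channelStep_state_noise (hYdef : ∀ n ω, Y n ω = g (Wt n ω) (N n ω))
    (hrec : ∀ n ω, Wt (n + 1) ω = S (Y n ω) (Wt n ω)) (n : ℕ) (ω : Ω) :
    channelStep g S (Wt n ω, N n ω) = (Y n ω, Wt (n + 1) ω) := by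
  rw [hrec, hYdef]
  rfl

variable {mΩ : MeasurableSpace Ω} [MeasurableSpace 𝒲] [MeasurableSpace 𝒴] [MeasurableSpace 𝒩]
  {μ : Measure Ω}

theorem measurable_channelStep (hg : Measurable fun p : 𝒲 × 𝒩 => g p.1 p.2)
    (hS : Measurable fun p : 𝒴 × 𝒲 => S p.1 p.2) : Measurable (channelStep g S) :=
  hg.prodMk (hS.comp (hg.prodMk measurable_fst))

theorem map_output_state_succ_eq_map_channelStep (hg : Measurable fun p : 𝒲 × 𝒩 => g p.1 p.2)
    (hS : Measurable fun p : 𝒴 × 𝒲 => S p.1 p.2) (hWt : ∀ n, Measurable (Wt n))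
    (hN : ∀ n, Measurable (N n)) (hYdef : ∀ n ω, Y n ω = g (Wt n ω) (N n ω))
    (hrec : ∀ n ω, Wt (n + 1) ω = S (Y n ω) (Wt n ω)) (n : ℕ) :
    μ.map (fun ω => (Y n ω, Wt (n + 1) ω))
      = (μ.map fun ω => (Wt n ω, N n ω)).map (channelStep g S) := by
  rw [Measure.map_map (measurable_channelStep hg hS) ((hWt n).prodMk (hN n))]
  congr 1
  funext ω
  exact (channelStep_state_noise hYdef hrec n ω).symm

abbrev messageNoiseSigma (W : Ω → 𝒲) (N : ℕ → Ω → 𝒩) (n : ℕ) : MeasurableSpace Ω :=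
  MeasurableSpace.comap (fun ω => (W ω, fun i : Fin n => N i ω)) inferInstance

theorem messageNoiseSigma_mono : Monotone (messageNoiseSigma W N) := by
  intro m n hmn
  have hrestrict : Measurable fun p : 𝒲 × (Fin n → 𝒩) =>
      (p.1, fun i : Fin m => p.2 (Fin.castLE hmn i)) :=
    measurable_fst.prodMk
      (measurable_pi_lambda _ fun i => (measurable_pi_apply _).comp measurable_snd)
  exact (hrestrict.comp (comap_measurable fun ω => (W ω, fun i : Fin n => N i ω))).comap_le

theorem measurable_messageNoiseSigma_channelStep (hg : Measurable fun p : 𝒲 × 𝒩 => g p.1 p.2)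
    (hS : Measurable fun p : 𝒴 × 𝒲 => S p.1 p.2) (hYdef : ∀ n ω, Y n ω = g (Wt n ω) (N n ω))
    (hrec : ∀ n ω, Wt (n + 1) ω = S (Y n ω) (Wt n ω)) {n : ℕ}
    (hWt : Measurable[messageNoiseSigma W N n] (Wt n)) :
    Measurable[messageNoiseSigma W N (n + 1)] fun ω => (Y n ω, Wt (n + 1) ω) := by
  have hN : Measurable[messageNoiseSigma W N (n + 1)] (N n) :=
    ((measurable_pi_apply (Fin.last n)).comp measurable_snd).comp
      (comap_measurable fun ω => (W ω, fun i : Fin (n + 1) => N i ω))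
  simp_rw [← channelStep_state_noise hYdef hrec n]
  exact (measurable_channelStep hg hS).comp
    ((hWt.mono (messageNoiseSigma_mono n.le_succ) le_rfl).prodMk hN)

theorem measurable_messageNoiseSigma_state (hg : Measurable fun p : 𝒲 × 𝒩 => g p.1 p.2)
    (hS : Measurable fun p : 𝒴 × 𝒲 => S p.1 p.2) (hW0 : Wt 0 = W)
    (hYdef : ∀ n ω, Y n ω = g (Wt n ω) (N n ω))
    (hrec : ∀ n ω, Wt (n + 1) ω = S (Y n ω) (Wt n ω)) (n : ℕ) :
    Measurable[messageNoiseSigma W N n] (Wt n) := by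
  induction n with
  | zero =>
    rw [hW0]
    exact measurable_fst.comp (comap_measurable fun ω => (W ω, fun i : Fin 0 => N i ω))
  | succ n ih => exact (measurable_messageNoiseSigma_channelStep hg hS hYdef hrec ih).snd

theorem measurable_messageNoiseSigma_outputs_state (hg : Measurable fun p : 𝒲 × 𝒩 => g p.1 p.2)
    (hS : Measurable fun p : 𝒴 × 𝒲 => S p.1 p.2) (hW0 : Wt 0 = W)
    (hYdef : ∀ n ω, Y n ω = g (Wt n ω) (N n ω))
    (hrec : ∀ n ω, Wt (n + 1) ω = S (Y n ω) (Wt n ω)) (n : ℕ) :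
    Measurable[messageNoiseSigma W N n] fun ω => ((fun i : Fin n => Y i ω), Wt n ω) := by
  have hstate := measurable_messageNoiseSigma_state hg hS hW0 hYdef hrec
  refine Measurable.prodMk
    ((@measurable_pi_iff Ω (Fin n) _ (messageNoiseSigma W N n) _ _).mpr fun i => ?_) (hstate n)
  exact (measurable_messageNoiseSigma_channelStep hg hS hYdef hrec (hstate i)).fst.mono
    (messageNoiseSigma_mono i.isLt) le_rfl

theorem indepFun_messageNoise_noise [IsFiniteMeasure μ] (hW : Measurable W)
    (hN : ∀ n, Measurable (N n)) (hiid : iIndepFun N μ)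
    (hindep : W ⟂ᵢ[μ] fun ω (n : ℕ) => N n ω) (n : ℕ) :
    (fun ω => (W ω, fun i : Fin n => N i ω)) ⟂ᵢ[μ] N n := by
  have hsplit : Measurable fun s : ℕ → 𝒩 => ((fun i : Fin n => s i), s n) :=
    (measurable_pi_lambda _ fun i => measurable_pi_apply _).prodMk (measurable_pi_apply n)
  have hrange : Measurable fun (v : Finset.range n → 𝒩) (i : Fin n) =>
      v ⟨i, Finset.mem_range.mpr i.isLt⟩ :=
    measurable_pi_lambda _ fun _ => measurable_pi_apply _
  have hpast : (fun ω (i : Fin n) => N i ω) ⟂ᵢ[μ] N n :=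
    (hiid.indepFun_finset (Finset.range n) {n} (by simp) hN).comp hrange
      (measurable_pi_apply (⟨n, Finset.mem_singleton_self n⟩ : ({n} : Finset ℕ)))
  exact (hindep.comp measurable_id hsplit).prodMk_left_of_prodMk_right hW
    (measurable_pi_lambda _ fun i => hN i) (hN n) hpast

theorem map_output_state_succ_eq_map_zero [IsFiniteMeasure μ]
    (hg : Measurable fun p : 𝒲 × 𝒩 => g p.1 p.2) (hS : Measurable fun p : 𝒴 × 𝒲 => S p.1 p.2)
    (hWt : ∀ n, Measurable (Wt n)) (hN : ∀ n, Measurable (N n))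
    (hYdef : ∀ n ω, Y n ω = g (Wt n ω) (N n ω))
    (hrec : ∀ n ω, Wt (n + 1) ω = S (Y n ω) (Wt n ω)) {n : ℕ} (hn : Wt n ⟂ᵢ[μ] N n)
    (h0 : Wt 0 ⟂ᵢ[μ] N 0) (hNn : μ.map (N n) = μ.map (N 0))
    (hWtn : μ.map (Wt n) = μ.map (Wt 0)) :
    μ.map (fun ω => (Y n ω, Wt (n + 1) ω)) = μ.map (fun ω => (Y 0 ω, Wt 1 ω)) := by
  rw [map_output_state_succ_eq_map_channelStep hg hS hWt hN hYdef hrec n,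
    map_output_state_succ_eq_map_channelStep hg hS hWt hN hYdef hrec 0,
    (indepFun_iff_map_prod_eq_prod_map_map (hWt n).aemeasurable (hN n).aemeasurable).mp hn,
    (indepFun_iff_map_prod_eq_prod_map_map (hWt 0).aemeasurable (hN 0).aemeasurable).mp h0,
    hNn, hWtn]

theorem indepFun_outputs_state_succ [IsFiniteMeasure μ]
    (hg : Measurable fun p : 𝒲 × 𝒩 => g p.1 p.2) (hS : Measurable fun p : 𝒴 × 𝒲 => S p.1 p.2)
    (hWt : ∀ n, Measurable (Wt n)) (hY : ∀ n, Measurable (Y n)) (hN : ∀ n, Measurable (N n))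
    (hYdef : ∀ n ω, Y n ω = g (Wt n ω) (N n ω))
    (hrec : ∀ n ω, Wt (n + 1) ω = S (Y n ω) (Wt n ω)) {n : ℕ}
    (hpast : (fun ω => ((fun i : Fin n => Y i ω), Wt n ω)) ⟂ᵢ[μ] N n)
    (hind : (fun ω (i : Fin n) => Y i ω) ⟂ᵢ[μ] Wt n) (hnew : Y n ⟂ᵢ[μ] Wt (n + 1)) :
    (fun ω (i : Fin (n + 1)) => Y i ω) ⟂ᵢ[μ] Wt (n + 1) := by
  have hU : Measurable fun ω (i : Fin n) => Y i ω := measurable_pi_lambda _ fun i => hY i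
  have hUVZ : (fun ω (i : Fin n) => Y i ω) ⟂ᵢ[μ] fun ω => (Wt n ω, N n ω) :=
    hpast.prodMk_right_of_prodMk_left hU (hWt n) (hN n) hind
  have hUYV : (fun ω (i : Fin n) => Y i ω) ⟂ᵢ[μ] fun ω => (Y n ω, Wt (n + 1) ω) := by
    simpa only [Function.comp_def, id, channelStep_state_noise hYdef hrec] using
      hUVZ.comp measurable_id (measurable_channelStep hg hS)
  have hsnoc : (fun ω => Fin.snoc (fun i : Fin n => Y i ω) (Y n ω))
      = fun ω (i : Fin (n + 1)) => Y i ω :=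
    funext fun ω => Fin.snoc_initialSegment (fun k => Y k ω) n
  rw [← hsnoc]
  exact (hUYV.prodMk_left_of_prodMk_right hU (hY n) (hWt (n + 1)) hnew).comp measurable_snoc
    measurable_id

theorem indepFun_outputs_state [IsProbabilityMeasure μ]
    (hg : Measurable fun p : 𝒲 × 𝒩 => g p.1 p.2) (hS : Measurable fun p : 𝒴 × 𝒲 => S p.1 p.2)
    (hWt : ∀ n, Measurable (Wt n)) (hY : ∀ n, Measurable (Y n)) (hN : ∀ n, Measurable (N n))
    (hYdef : ∀ n ω, Y n ω = g (Wt n ω) (N n ω))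
    (hrec : ∀ n ω, Wt (n + 1) ω = S (Y n ω) (Wt n ω))
    (hident : ∀ n, μ.map (N n) = μ.map (N 0))
    (hpast : ∀ n, (fun ω => ((fun i : Fin n => Y i ω), Wt n ω)) ⟂ᵢ[μ] N n)
    (hfirst : μ.map (fun ω => (Y 0 ω, Wt 1 ω)) = (μ.map (Y 0)).prod (μ.map (Wt 0))) (n : ℕ) :
    (fun ω (i : Fin n) => Y i ω) ⟂ᵢ[μ] Wt n ∧ μ.map (Wt n) = μ.map (Wt 0) := by
  have := Measure.isProbabilityMeasure_map (μ := μ) (hWt 0).aemeasurable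
  have := Measure.isProbabilityMeasure_map (μ := μ) (hY 0).aemeasurable
  have hstate : ∀ n, Wt n ⟂ᵢ[μ] N n := fun n => (hpast n).comp measurable_snd measurable_id
  induction n with
  | zero =>
    refine ⟨?_, rfl⟩
    rw [Subsingleton.elim (fun ω (i : Fin 0) => Y i ω) fun _ => default]
    exact indepFun_const_left _ _
  | succ n ih =>
    have hlaw : μ.map (fun ω => (Y n ω, Wt (n + 1) ω)) = (μ.map (Y 0)).prod (μ.map (Wt 0)) := by
      rw [map_output_state_succ_eq_map_zero hg hS hWt hN hYdef hrec (hstate n) (hstate 0)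
        (hident n) ih.2, hfirst]
    obtain ⟨hnew, -, hWtlaw⟩ := indepFun_of_map_prodMk_eq_prod (hY n) (hWt (n + 1)) hlaw
    exact ⟨indepFun_outputs_state_succ hg hS hWt hY hN hYdef hrec (hpast n) ih.1 hnew, hWtlaw⟩

end PosteriorMatching

end ProbabilityTheory

/-- Lemma 7: for a posterior matching scheme (`S_y` pushes the posterior `P_{W̃_1|Y_1=y}`
forward to the prior `P_W`, and `W̃_{n+1} = S_{Y_n}(W̃_n)`), the conditional distribution of
`W̃_{n+1}` given `Y_{1:n}` is a.s. the prior `P_W`; in particular `W̃_{n+1}` is independent of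
`(Y_1, …, Y_n)`. -/
theorem pm_posterior_eq_prior
    {Ω 𝒲 𝒴 𝒩 : Type*} {mΩ : MeasurableSpace Ω}
    [MeasurableSpace 𝒲] [StandardBorelSpace 𝒲] [Nonempty 𝒲]
    [MeasurableSpace 𝒴] [MeasurableSpace 𝒩]
    (μ : Measure Ω) [IsProbabilityMeasure μ]
    (W : Ω → 𝒲) (hW : Measurable W)
    (N : ℕ → Ω → 𝒩) (hN : ∀ n, Measurable (N n))
    -- memoryless time-invariant channel: i.i.d. noise independent of the message
    (hiid : iIndepFun N μ)
    (hident : ∀ n, Measure.map (N n) μ = Measure.map (N 0) μ)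
    (hindep : IndepFun W (fun ω (n : ℕ) => N n ω) μ)
    (g : 𝒲 → 𝒩 → 𝒴) (hg : Measurable fun p : 𝒲 × 𝒩 => g p.1 p.2)
    (S : 𝒴 → 𝒲 → 𝒲) (hS : Measurable fun p : 𝒴 × 𝒲 => S p.1 p.2)
    (Wt : ℕ → Ω → 𝒲) (Y : ℕ → Ω → 𝒴)
    (hWt : ∀ n, Measurable (Wt n)) (hY : ∀ n, Measurable (Y n))
    (hW0 : Wt 0 = W)
    (hYdef : ∀ n ω, Y n ω = g (Wt n ω) (N n ω))
    (hrec : ∀ n ω, Wt (n + 1) ω = S (Y n ω) (Wt n ω))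
    -- posterior matching: `S_y # P_{W̃_1|Y_1=y} = P_W` for (almost) all `y`
    (hPM : ∀ᵐ y ∂(Measure.map (Y 0) μ),
      Measure.map (S y) ((condDistrib (Wt 0) (Y 0) μ) y) = Measure.map W μ) :
    ∀ n,
      (∀ᵐ ω ∂μ,
        (condDistrib (Wt (n + 1)) (fun ω' (i : Fin (n + 1)) => Y i ω') μ)
          (fun i : Fin (n + 1) => Y i ω) = Measure.map W μ) ∧
      IndepFun (Wt (n + 1)) (fun ω (i : Fin (n + 1)) => Y i ω) μ := by
  rw [← hW0] at hPM ⊢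
  have hpast : ∀ n, (fun ω => ((fun i : Fin n => Y i ω), Wt n ω)) ⟂ᵢ[μ] N n := fun n =>
    (indepFun_messageNoise_noise hW hN hiid hindep n).of_measurable_comap_left
      (measurable_messageNoiseSigma_outputs_state hg hS hW0 hYdef hrec n)
  have hfirst : μ.map (fun ω => (Y 0 ω, Wt 1 ω)) = (μ.map (Y 0)).prod (μ.map (Wt 0)) := by
    simp_rw [hrec 0]
    exact map_prodMk_eq_prod_of_ae_map_condDistrib_eq (hWt 0) (hY 0) hS hPM
  intro n
  obtain ⟨hind, hlaw⟩ :=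
    indepFun_outputs_state hg hS hWt hY hN hYdef hrec hident hpast hfirst (n + 1)
  rw [← hlaw]
  exact ⟨hind.ae_condDistrib_apply_eq_map (measurable_pi_lambda _ fun i => hY i) (hWt _),
    hind.symm⟩
end

section
/- If the posterior matching scheme is reliable (i.e., $W$ is a.s. $\sigma(Y_{1:\infty})$-measurable under $\overline{\mathbb{P}}$), then the stationary Markov chain $({\tilde W}_n)_{n\geq 1}$ is $\overline{\mathbb{P}}$-ergodic: its tail sigma-algebra is $\overline{\mathbb{P}}$-trivial. -/
/-!
Posterior matching makes `W̃ₙ` independent of the past outputs `Y_{<n}`, with law `P_W`: the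
condition `S_y # P_{W̃|Y=y} = P_W` says that one channel use followed by the update sends
`P_W ⊗ P_N` to `P_Y ⊗ P_W`, and the noise entering at step `n` is independent of everything
before. The chain from time `n` on is a function of `W̃ₙ` and of the noise from time `n` on,
which is independent of `(W̃ₙ, Y_{<n})`; hence a tail event is independent of `Y_{<n}` for every
`n`, and so of `σ(Y_{1:∞})`. A tail event is also a function of `W` and the outputs, so by
reliability it is a.s. equal to a `σ(Y_{1:∞})`-measurable event: it is independent of itself
and has probability `0` or `1`.
-/

open MeasureTheory ProbabilityTheory

open MeasurableSpace

local notation "σ(" X ")" => MeasurableSpace.comap X inferInstance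

namespace ProbabilityTheory

variable {Ω : Type*} {mΩ : MeasurableSpace Ω} {μ : Measure Ω}

lemma sup_eq_generateFrom_image2_inter (m₁ m₂ : MeasurableSpace Ω) :
    m₁ ⊔ m₂ = generateFrom
      (Set.image2 (· ∩ ·) {s | MeasurableSet[m₁] s} {s | MeasurableSet[m₂] s}) := by
  refine le_antisymm (sup_le (fun s hs => ?_) (fun s hs => ?_)) (generateFrom_le ?_)
  · exact measurableSet_generateFrom ⟨s, hs, Set.univ, MeasurableSet.univ, Set.inter_univ s⟩
  · exact measurableSet_generateFrom ⟨Set.univ, MeasurableSet.univ, s, hs, Set.univ_inter s⟩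
  · rintro _ ⟨a, ha, b, hb, rfl⟩
    exact (le_sup_left (b := m₂) a ha).inter (le_sup_right (a := m₁) b hb)

lemma isPiSystem_image2_inter (m₁ m₂ : MeasurableSpace Ω) :
    IsPiSystem (Set.image2 (· ∩ ·) {s | MeasurableSet[m₁] s} {s | MeasurableSet[m₂] s}) := by
  rintro _ ⟨a, ha, b, hb, rfl⟩ _ ⟨a', ha', b', hb', rfl⟩ -
  exact ⟨a ∩ a', ha.inter ha', b ∩ b', hb.inter hb', Set.inter_inter_inter_comm a a' b b'⟩

lemma Indep.indep_sup_right [IsZeroOrProbabilityMeasure μ] {m₁ m₂ m₃ : MeasurableSpace Ω}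
    (h₁ : m₁ ≤ mΩ) (h₂ : m₂ ≤ mΩ) (h₃ : m₃ ≤ mΩ)
    (h₁₂ : Indep m₁ m₂ μ) (h : Indep (m₁ ⊔ m₂) m₃ μ) : Indep m₁ (m₂ ⊔ m₃) μ := by
  refine IndepSets.indep h₁ (sup_le h₂ h₃) (@isPiSystem_measurableSet Ω m₁)
    (isPiSystem_image2_inter m₂ m₃) (@generateFrom_measurableSet Ω m₁).symm
    (sup_eq_generateFrom_image2_inter m₂ m₃) ((IndepSets_iff _ _ _).mpr ?_)
  rintro a _ ha ⟨b, hb, c, hc, rfl⟩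
  have hb' : MeasurableSet[m₁ ⊔ m₂] b := le_sup_right (a := m₁) b hb
  have hab : MeasurableSet[m₁ ⊔ m₂] (a ∩ b) := (le_sup_left (b := m₂) a ha).inter hb'
  calc μ (a ∩ (b ∩ c)) = μ (a ∩ b) * μ c := by
        rw [← Set.inter_assoc]; exact (Indep_iff _ _ μ).mp h _ _ hab hc
    _ = μ a * (μ b * μ c) := by rw [(Indep_iff _ _ μ).mp h₁₂ _ _ ha hb, mul_assoc]
    _ = μ a * μ (b ∩ c) := by rw [(Indep_iff _ _ μ).mp h _ _ hb' hc]

lemma measure_eq_zero_or_one_of_indep_of_ae_eq [IsFiniteMeasure μ] {m₁ m₂ : MeasurableSpace Ω}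
    (h : Indep m₁ m₂ μ) {s t : Set Ω} (hs : MeasurableSet[m₂] s) (ht : MeasurableSet[m₁] t)
    (hst : s =ᵐ[μ] t) : μ s = 0 ∨ μ s = 1 := by
  have hself : μ s * μ s = 1 * μ s :=
    calc μ s * μ s = μ t * μ s := by rw [measure_congr hst]
      _ = μ (t ∩ s) := ((Indep_iff _ _ μ).mp h _ _ ht hs).symm
      _ = 1 * μ s := by
        rw [one_mul, measure_congr (hst.symm.inter (Filter.EventuallyEq.refl _ s)),
          Set.inter_self]
  by_cases h0 : μ s = 0
  · exact Or.inl h0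
  · exact Or.inr ((ENNReal.mul_left_inj h0 (measure_ne_top μ s)).mp hself)

end ProbabilityTheory

lemma exists_measurableSet_ae_eq_of_measurableSet_comap_prodMk {Ω α β : Type*}
    [MeasurableSpace α] [MeasurableSpace β] {m mΩ : MeasurableSpace Ω} {μ : Measure Ω}
    {X X' : Ω → α} {Z : Ω → β} (hX' : Measurable[m] X') (hZ : Measurable[m] Z)
    (hXX' : X =ᵐ[μ] X') {s : Set Ω} (hs : MeasurableSet[σ(fun ω => (X ω, Z ω))] s) :
    ∃ t, MeasurableSet[m] t ∧ s =ᵐ[μ] t := by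
  obtain ⟨D, hD, rfl⟩ := hs
  refine ⟨(fun ω => (X' ω, Z ω)) ⁻¹' D, (hX'.prodMk hZ) hD, ?_⟩
  filter_upwards [hXX'] with ω hω
  change ((X ω, Z ω) ∈ D) = ((X' ω, Z ω) ∈ D)
  rw [hω]

section PastAndFuture

variable {Ω 𝒳 𝒴 𝒵 : Type*} [MeasurableSpace 𝒳] [MeasurableSpace 𝒴] [MeasurableSpace 𝒵]

def pastSigma (V : ℕ → Ω → 𝒳) (n : ℕ) : MeasurableSpace Ω :=
  ⨆ i < n, σ(V i)

def futureSigma (V : ℕ → Ω → 𝒳) (n : ℕ) : MeasurableSpace Ω :=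
  ⨆ k, σ(V (n + k))

lemma comap_le_pastSigma {V : ℕ → Ω → 𝒳} {i n : ℕ} (h : i < n) : σ(V i) ≤ pastSigma V n :=
  le_iSup₂ (f := fun i (_ : i < n) => σ(V i)) i h

lemma pastSigma_le_of_measurable {V : ℕ → Ω → 𝒳} {m : MeasurableSpace Ω} {n : ℕ}
    (h : ∀ i < n, Measurable[m] (V i)) : pastSigma V n ≤ m :=
  iSup₂_le fun i hi => (h i hi).comap_le

lemma pastSigma_monotone (V : ℕ → Ω → 𝒳) : Monotone (pastSigma V) :=
  fun _ _ hmn => iSup₂_le fun _ hi => comap_le_pastSigma (hi.trans_le hmn)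

lemma pastSigma_zero (V : ℕ → Ω → 𝒳) : pastSigma V 0 = ⊥ :=
  le_bot_iff.mp (iSup₂_le fun i hi => absurd hi (Nat.not_lt_zero i))

lemma pastSigma_succ (V : ℕ → Ω → 𝒳) (n : ℕ) :
    pastSigma V (n + 1) = σ(V n) ⊔ pastSigma V n := by
  refine le_antisymm (iSup₂_le fun i hi => ?_)
    (sup_le (comap_le_pastSigma n.lt_succ_self) (pastSigma_monotone V n.le_succ))
  rcases Nat.lt_succ_iff_lt_or_eq.mp hi with hi | rfl
  · exact (comap_le_pastSigma hi).trans le_sup_right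
  · exact le_sup_left

lemma iSup_pastSigma (V : ℕ → Ω → 𝒳) : ⨆ n, pastSigma V n = ⨆ n, σ(V n) :=
  le_antisymm (iSup_le fun _ => iSup₂_le fun i _ => le_iSup (fun i => σ(V i)) i)
    (iSup_le fun i => (comap_le_pastSigma i.lt_succ_self).trans (le_iSup _ (i + 1)))

lemma comap_le_futureSigma (V : ℕ → Ω → 𝒳) (n k : ℕ) : σ(V (n + k)) ≤ futureSigma V n :=
  le_iSup (fun k => σ(V (n + k))) k

lemma tailSigma_le_futureSigma (V : ℕ → Ω → 𝒳) (n : ℕ) : tailSigma V ≤ futureSigma V n :=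
  iInf_le (fun n => futureSigma V n) n

lemma measurable_add_of_recursion {X : ℕ → Ω → 𝒳} {Z : ℕ → Ω → 𝒵} {F : 𝒳 → 𝒵 → 𝒳}
    (hF : Measurable fun p : 𝒳 × 𝒵 => F p.1 p.2) (hX : ∀ n ω, X (n + 1) ω = F (X n ω) (Z n ω))
    {m : MeasurableSpace Ω} {n k : ℕ} (hXn : Measurable[m] (X n))
    (hZ : ∀ j < k, Measurable[m] (Z (n + j))) : Measurable[m] (X (n + k)) := by
  induction k with
  | zero => exact hXn
  | succ k ih =>
    rw [show X (n + (k + 1)) = fun ω => F (X (n + k) ω) (Z (n + k) ω) from funext (hX (n + k))]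
    exact hF.comp ((ih fun j hj => hZ j (hj.trans k.lt_succ_self)).prodMk (hZ k k.lt_succ_self))

lemma tailSigma_le_comap_prodMk {X : ℕ → Ω → 𝒳} {Z : ℕ → Ω → 𝒵} {F : 𝒳 → 𝒵 → 𝒳}
    (hF : Measurable fun p : 𝒳 × 𝒵 => F p.1 p.2) (hX : ∀ n ω, X (n + 1) ω = F (X n ω) (Z n ω)) :
    tailSigma X ≤ σ(fun ω => (X 0 ω, fun n => Z n ω)) := by
  have hXZ := comap_measurable (m := inferInstanceAs (MeasurableSpace (𝒳 × (ℕ → 𝒵))))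
    (fun ω => (X 0 ω, fun n => Z n ω))
  refine (tailSigma_le_futureSigma X 0).trans (iSup_le fun k => Measurable.comap_le ?_)
  exact measurable_add_of_recursion hF hX (measurable_fst.comp hXZ)
    fun j _ => (measurable_pi_apply (0 + j)).comp (measurable_snd.comp hXZ)

variable {X : ℕ → Ω → 𝒳} {Y : ℕ → Ω → 𝒴} {Z : ℕ → Ω → 𝒵} {H : 𝒳 × 𝒵 → 𝒴 × 𝒳}

lemma futureSigma_le_comap_sup_futureSigma (hH : Measurable H)
    (hX : ∀ n ω, H (X n ω, Z n ω) = (Y n ω, X (n + 1) ω)) (n : ℕ) :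
    futureSigma X n ≤ σ(X n) ⊔ futureSigma Z n := by
  refine iSup_le fun k => Measurable.comap_le ?_
  refine measurable_add_of_recursion (F := fun x z => (H (x, z)).2) (measurable_snd.comp hH)
    (fun n ω => by rw [hX]) ((comap_measurable (X n)).mono le_sup_left le_rfl) fun j _ => ?_
  exact (comap_measurable (Z (n + j))).mono
    ((comap_le_futureSigma Z n j).trans le_sup_right) le_rfl

lemma comap_sup_pastSigma_le (hH : Measurable H)
    (hX : ∀ n ω, H (X n ω, Z n ω) = (Y n ω, X (n + 1) ω)) (n : ℕ) :
    σ(X n) ⊔ pastSigma Y n ≤ σ(X 0) ⊔ pastSigma Z n := by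
  have hZ : ∀ j < n, Measurable[σ(X 0) ⊔ pastSigma Z n] (Z j) := fun j hj =>
    (comap_measurable (Z j)).mono ((comap_le_pastSigma hj).trans le_sup_right) le_rfl
  have hXi : ∀ i ≤ n, Measurable[σ(X 0) ⊔ pastSigma Z n] (X i) := fun i hi => by
    simpa using measurable_add_of_recursion (n := 0) (k := i) (F := fun x z => (H (x, z)).2)
      (measurable_snd.comp hH) (fun n ω => by rw [hX])
      ((comap_measurable (X 0)).mono le_sup_left le_rfl)
      fun j hj => by simpa using hZ j (hj.trans_le hi)
  refine sup_le (hXi n le_rfl).comap_le (pastSigma_le_of_measurable fun i hi => ?_)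
  rw [show Y i = fun ω => (H (X i ω, Z i ω)).1 from funext fun ω => by rw [hX]]
  exact measurable_fst.comp (hH.comp ((hXi i hi.le).prodMk (hZ i hi)))

end PastAndFuture

section FeedbackChain

variable {Ω 𝒳 𝒴 𝒵 : Type*} [MeasurableSpace 𝒳] [MeasurableSpace 𝒴] [MeasurableSpace 𝒵]

lemma indep_comap_sup_pastSigma_futureSigma {mΩ : MeasurableSpace Ω} {μ : Measure Ω}
    [IsZeroOrProbabilityMeasure μ] {X : Ω → 𝒳} {Z : ℕ → Ω → 𝒵} (hX : Measurable X)
    (hZ : ∀ n, Measurable (Z n)) (hiid : iIndepFun Z μ)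
    (hindep : IndepFun X (fun ω n => Z n ω) μ) (n : ℕ) :
    Indep (σ(X) ⊔ pastSigma Z n) (futureSigma Z n) μ := by
  have hpast : pastSigma Z n ≤ mΩ := pastSigma_le_of_measurable fun i _ => hZ i
  have hfuture : futureSigma Z n ≤ mΩ := iSup_le fun k => (hZ (n + k)).comap_le
  have hZX : Indep (futureSigma Z n ⊔ pastSigma Z n) σ(X) μ := by
    refine (indep_of_indep_of_le_right ((IndepFun_iff_Indep _ _ _).mp hindep) ?_).symm
    exact sup_le (iSup_le fun k => comap_le_comap_pi (g := Z) (n + k))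
      (iSup₂_le fun i _ => comap_le_comap_pi (g := Z) i)
  have hfp : Indep (futureSigma Z n) (pastSigma Z n) μ := by
    refine indep_of_indep_of_le_left (indep_iSup_of_disjoint (fun i => (hZ i).comap_le)
      hiid.iIndep (S := {i | n ≤ i}) (T := {i | i < n})
      (Set.disjoint_left.mpr fun i (hi : n ≤ i) (hi' : i < n) => absurd hi (not_le.mpr hi')))
      (iSup_le fun k => ?_)
    exact le_iSup₂ (f := fun i (_ : n ≤ i) => σ(Z i)) (n + k) (Nat.le_add_right n k)
  rw [sup_comm]
  exact (hfp.indep_sup_right hfuture hpast hX.comap_le hZX).symm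

lemma map_eq_and_indep_of_map_prod_eq {P mΩ : MeasurableSpace Ω} {μ : Measure Ω}
    [IsProbabilityMeasure μ] {X X' : Ω → 𝒳} {Z : Ω → 𝒵} {Y : Ω → 𝒴} {π : Measure 𝒳}
    {ν : Measure 𝒵} {ρ : Measure 𝒴} [IsProbabilityMeasure π] [IsProbabilityMeasure ρ]
    {H : 𝒳 × 𝒵 → 𝒴 × 𝒳} (hH : Measurable H) (hHlaw : (π.prod ν).map H = ρ.prod π)
    (hX : Measurable X) (hZ : Measurable Z) (hout : ∀ ω, H (X ω, Z ω) = (Y ω, X' ω))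
    (hP : P ≤ mΩ) (hXlaw : μ.map X = π) (hZlaw : μ.map Z = ν) (hXP : Indep σ(X) P μ)
    (hXPZ : Indep (σ(X) ⊔ P) σ(Z) μ) :
    μ.map X' = π ∧ Indep σ(X') (σ(Y) ⊔ P) μ := by
  have hout' : (fun ω => (Y ω, X' ω)) = H ∘ fun ω => (X ω, Z ω) := funext fun ω => (hout ω).symm
  have hYX' : Measurable[σ(X) ⊔ σ(Z)] fun ω => (Y ω, X' ω) := hout' ▸ hH.comp
    (((comap_measurable X).mono le_sup_left le_rfl).prodMk
      ((comap_measurable Z).mono le_sup_right le_rfl))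
  have hY : Measurable Y := measurable_fst.comp (hYX'.mono (sup_le hX.comap_le hZ.comap_le) le_rfl)
  have hX' : Measurable X' :=
    measurable_snd.comp (hYX'.mono (sup_le hX.comap_le hZ.comap_le) le_rfl)
  have hXZ : IndepFun X Z μ :=
    (IndepFun_iff_Indep _ _ _).mpr (indep_of_indep_of_le_left hXPZ le_sup_left)
  have hlaw : μ.map (fun ω => (Y ω, X' ω)) = ρ.prod π := by
    rw [hout', ← Measure.map_map hH (hX.prodMk hZ),
      (indepFun_iff_map_prod_eq_prod_map_map hX.aemeasurable hZ.aemeasurable).mp hXZ,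
      hXlaw, hZlaw, hHlaw]
  have hYlaw : μ.map Y = ρ := by rw [← Measure.fst_map_prodMk hX', hlaw, Measure.fst_prod]
  have hX'law : μ.map X' = π := by rw [← Measure.snd_map_prodMk hY, hlaw, Measure.snd_prod]
  have hX'Y : Indep σ(X') σ(Y) μ :=
    ((IndepFun_iff_Indep _ _ _).mp ((indepFun_iff_map_prod_eq_prod_map_map hY.aemeasurable
      hX'.aemeasurable).mpr (by rw [hlaw, hYlaw, hX'law]))).symm
  have hXZP : Indep (σ(X) ⊔ σ(Z)) P μ := by
    rw [sup_comm] at hXPZ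
    exact (hXP.symm.indep_sup_right hP hX.comap_le hZ.comap_le hXPZ).symm
  refine ⟨hX'law, hX'Y.indep_sup_right hX'.comap_le hY.comap_le hP
    (indep_of_indep_of_le_left hXZP (sup_le ?_ ?_))⟩
  · exact (measurable_snd.comp hYX').comap_le
  · exact (measurable_fst.comp hYX').comap_le

variable {mΩ : MeasurableSpace Ω} {μ : Measure Ω} [IsProbabilityMeasure μ]
  {X : ℕ → Ω → 𝒳} {Y : ℕ → Ω → 𝒴} {Z : ℕ → Ω → 𝒵} {H : 𝒳 × 𝒵 → 𝒴 × 𝒳}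

lemma map_eq_and_indep_pastSigma (hH : Measurable H)
    (hHlaw : ((μ.map (X 0)).prod (μ.map (Z 0))).map H = (μ.map (Y 0)).prod (μ.map (X 0)))
    (hX : ∀ n, Measurable (X n)) (hY : ∀ n, Measurable (Y n)) (hZ : ∀ n, Measurable (Z n))
    (hident : ∀ n, μ.map (Z n) = μ.map (Z 0))
    (hrec : ∀ n ω, H (X n ω, Z n ω) = (Y n ω, X (n + 1) ω))
    (hnoise : ∀ n, Indep (σ(X n) ⊔ pastSigma Y n) σ(Z n) μ) (n : ℕ) :
    μ.map (X n) = μ.map (X 0) ∧ Indep σ(X n) (pastSigma Y n) μ := by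
  have := Measure.isProbabilityMeasure_map (μ := μ) (hX 0).aemeasurable
  have := Measure.isProbabilityMeasure_map (μ := μ) (hY 0).aemeasurable
  induction n with
  | zero => exact ⟨rfl, pastSigma_zero Y ▸ indep_bot_right _⟩
  | succ n ih =>
    rw [pastSigma_succ]
    exact map_eq_and_indep_of_map_prod_eq hH hHlaw (hX n) (hZ n) (hrec n)
      (pastSigma_le_of_measurable fun i _ => hY i) ih.1 (hident n) ih.2 (hnoise n)

theorem indep_iSup_comap_tailSigma (hH : Measurable H)
    (hHlaw : ((μ.map (X 0)).prod (μ.map (Z 0))).map H = (μ.map (Y 0)).prod (μ.map (X 0)))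
    (hX : ∀ n, Measurable (X n)) (hY : ∀ n, Measurable (Y n)) (hZ : ∀ n, Measurable (Z n))
    (hident : ∀ n, μ.map (Z n) = μ.map (Z 0))
    (hrec : ∀ n ω, H (X n ω, Z n ω) = (Y n ω, X (n + 1) ω))
    (hnoise : ∀ n, Indep (σ(X 0) ⊔ pastSigma Z n) (futureSigma Z n) μ) :
    Indep (⨆ n, σ(Y n)) (tailSigma X) μ := by
  have hpast_le : ∀ n, pastSigma Y n ≤ mΩ := fun n => pastSigma_le_of_measurable fun i _ => hY i
  have hfuture_le : ∀ n, futureSigma Z n ≤ mΩ := fun n => iSup_le fun k => (hZ (n + k)).comap_le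
  have hnoise' : ∀ n, Indep (σ(X n) ⊔ pastSigma Y n) (futureSigma Z n) μ := fun n =>
    indep_of_indep_of_le_left (hnoise n) (comap_sup_pastSigma_le hH hrec n)
  have hinv := map_eq_and_indep_pastSigma hH hHlaw hX hY hZ hident hrec fun n =>
    indep_of_indep_of_le_right (hnoise' n) (comap_le_futureSigma Z n 0)
  have hpast : ∀ n, Indep (pastSigma Y n) (tailSigma X) μ := fun n => by
    refine indep_of_indep_of_le_right ?_ ((tailSigma_le_futureSigma X n).trans
      (futureSigma_le_comap_sup_futureSigma hH hrec n))
    refine (hinv n).2.symm.indep_sup_right (hpast_le n) (hX n).comap_le (hfuture_le n) ?_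
    rw [sup_comm]
    exact hnoise' n
  rw [← iSup_pastSigma]
  exact indep_iSup_of_monotone hpast hpast_le
    ((tailSigma_le_futureSigma X 0).trans (iSup_le fun k => (hX _).comap_le))
    (pastSigma_monotone Y)

end FeedbackChain

section PosteriorMatching

variable {Ω 𝒲 𝒴 𝒩 : Type*} {mΩ : MeasurableSpace Ω} [MeasurableSpace 𝒲] [MeasurableSpace 𝒴]
  [MeasurableSpace 𝒩] {μ : Measure Ω}

lemma map_prodMk_eq_prod_of_map_condDistrib [StandardBorelSpace 𝒲] [Nonempty 𝒲]
    [IsFiniteMeasure μ] {X : Ω → 𝒲} {Y : Ω → 𝒴} (hX : Measurable X) (hY : Measurable Y)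
    {S : 𝒴 → 𝒲 → 𝒲} (hS : Measurable fun p : 𝒴 × 𝒲 => S p.1 p.2) {π : Measure 𝒲}
    [SigmaFinite π] (hPM : ∀ᵐ y ∂(μ.map Y), (condDistrib X Y μ y).map (S y) = π) :
    μ.map (fun ω => (Y ω, S (Y ω) (X ω))) = (μ.map Y).prod π := by
  set T : 𝒴 × 𝒲 → 𝒴 × 𝒲 := fun p => (p.1, S p.1 p.2)
  have hT : Measurable T := measurable_fst.prodMk hS
  have hmap : μ.map (fun ω => (Y ω, S (Y ω) (X ω))) = (μ.map Y ⊗ₘ condDistrib X Y μ).map T := by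
    rw [compProd_map_condDistrib hX.aemeasurable, Measure.map_map hT (hY.prodMk hX)]
    rfl
  refine (Measure.prod_eq fun A B hA hB => ?_).symm
  have hsection : ∀ y, condDistrib X Y μ y (Prod.mk y ⁻¹' (T ⁻¹' A ×ˢ B)) =
      A.indicator (fun y => condDistrib X Y μ y (S y ⁻¹' B)) y := by
    intro y
    by_cases hy : y ∈ A
    · rw [Set.indicator_of_mem hy]
      congr 1; ext w; simp [T, hy]
    · rw [Set.indicator_of_notMem hy, ← measure_empty (μ := condDistrib X Y μ y)]
      congr 1; ext w; simp [T, hy]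
  have hconst : ∀ᵐ y ∂(μ.map Y), condDistrib X Y μ y (S y ⁻¹' B) = π B := hPM.mono fun y hy => by
    rw [← hy, Measure.map_apply (show Measurable (S y) from hS.comp measurable_prodMk_left) hB]
  rw [hmap, Measure.map_apply hT (hA.prod hB), Measure.compProd_apply (hT (hA.prod hB)),
    lintegral_congr hsection, lintegral_indicator hA,
    lintegral_congr_ae (ae_restrict_of_ae hconst), setLIntegral_const, mul_comm]

def pmStep (g : 𝒲 → 𝒩 → 𝒴) (S : 𝒴 → 𝒲 → 𝒲) (p : 𝒲 × 𝒩) : 𝒴 × 𝒲 :=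
  (g p.1 p.2, S (g p.1 p.2) p.1)

lemma measurable_pmStep {g : 𝒲 → 𝒩 → 𝒴} {S : 𝒴 → 𝒲 → 𝒲}
    (hg : Measurable fun p : 𝒲 × 𝒩 => g p.1 p.2) (hS : Measurable fun p : 𝒴 × 𝒲 => S p.1 p.2) :
    Measurable (pmStep g S) :=
  hg.prodMk (hS.comp (hg.prodMk measurable_fst))

lemma map_pmStep_prod_eq_prod [StandardBorelSpace 𝒲] [Nonempty 𝒲] [IsFiniteMeasure μ]
    {g : 𝒲 → 𝒩 → 𝒴} {S : 𝒴 → 𝒲 → 𝒲}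
    (hg : Measurable fun p : 𝒲 × 𝒩 => g p.1 p.2) (hS : Measurable fun p : 𝒴 × 𝒲 => S p.1 p.2)
    {X : Ω → 𝒲} {Z : Ω → 𝒩} {Y : Ω → 𝒴} (hX : Measurable X) (hZ : Measurable Z)
    (hY : Measurable Y) (hYdef : ∀ ω, Y ω = g (X ω) (Z ω)) (hXZ : IndepFun X Z μ)
    (hPM : ∀ᵐ y ∂(μ.map Y), (condDistrib X Y μ y).map (S y) = μ.map X) :
    ((μ.map X).prod (μ.map Z)).map (pmStep g S) = (μ.map Y).prod (μ.map X) := by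
  rw [← (indepFun_iff_map_prod_eq_prod_map_map hX.aemeasurable hZ.aemeasurable).mp hXZ,
    Measure.map_map (measurable_pmStep hg hS) (hX.prodMk hZ)]
  convert map_prodMk_eq_prod_of_map_condDistrib hX hY hS hPM using 2
  ext ω <;> simp [pmStep, hYdef]

end PosteriorMatching

theorem pm_reliable_implies_ergodic_general
    {Ω 𝒲 𝒴 𝒩 : Type*} {mΩ : MeasurableSpace Ω}
    [MeasurableSpace 𝒲] [StandardBorelSpace 𝒲] [Nonempty 𝒲]
    [MeasurableSpace 𝒴] [MeasurableSpace 𝒩]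
    (μ : Measure Ω) [IsProbabilityMeasure μ]
    (W : Ω → 𝒲)
    (N : ℕ → Ω → 𝒩) (hN : ∀ n, Measurable (N n))
    -- memoryless time-invariant channel: i.i.d. noise independent of the message
    (hiid : iIndepFun N μ)
    (hident : ∀ n, Measure.map (N n) μ = Measure.map (N 0) μ)
    (hindep : IndepFun W (fun ω (n : ℕ) => N n ω) μ)
    (g : 𝒲 → 𝒩 → 𝒴) (hg : Measurable fun p : 𝒲 × 𝒩 => g p.1 p.2)
    (S : 𝒴 → 𝒲 → 𝒲) (hS : Measurable fun p : 𝒴 × 𝒲 => S p.1 p.2)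
    (Wt : ℕ → Ω → 𝒲) (Y : ℕ → Ω → 𝒴)
    (hWt : ∀ n, Measurable (Wt n)) (hY : ∀ n, Measurable (Y n))
    (hW0 : Wt 0 = W)
    (hYdef : ∀ n ω, Y n ω = g (Wt n ω) (N n ω))
    (hrec : ∀ n ω, Wt (n + 1) ω = S (Y n ω) (Wt n ω))
    -- posterior matching: `S_y # P_{W̃_1|Y_1=y} = P_W` for (almost) all `y`
    (hPM : ∀ᵐ y ∂(Measure.map (Y 0) μ),
      Measure.map (S y) ((condDistrib (Wt 0) (Y 0) μ) y) = Measure.map W μ)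
    -- reliability: `W` is a.s. measurable w.r.t. `σ(Y_{1:∞})`
    (hreliable : ∃ W' : Ω → 𝒲,
      Measurable[⨆ n, MeasurableSpace.comap (Y n) inferInstance] W' ∧ W =ᵐ[μ] W') :
    ∀ E : Set Ω, MeasurableSet[tailSigma Wt] E → μ E = 0 ∨ μ E = 1 := by
  intro E hE
  subst hW0
  obtain ⟨W', hW', hWW'⟩ := hreliable
  have hstep : ∀ n ω, pmStep g S (Wt n ω, N n ω) = (Y n ω, Wt (n + 1) ω) := fun n ω => by
    rw [pmStep, ← hYdef, ← hrec]
  have hchannel := map_pmStep_prod_eq_prod hg hS (hWt 0) (hN 0) (hY 0) (hYdef 0)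
    (hindep.comp measurable_id (measurable_pi_apply 0)) hPM
  have hYtail : Indep (⨆ n, σ(Y n)) (tailSigma Wt) μ :=
    indep_iSup_comap_tailSigma (measurable_pmStep hg hS) hchannel hWt hY hN hident hstep
      (indep_comap_sup_pastSigma_futureSigma (hWt 0) hN hiid hindep)
  have hYseq : Measurable[⨆ n, σ(Y n)] fun ω n => Y n ω :=
    @measurable_pi_lambda _ _ _ (⨆ n, σ(Y n)) _ _ fun n =>
      (comap_measurable (Y n)).mono (le_iSup (fun n => σ(Y n)) n) le_rfl
  obtain ⟨E', hE', hEE'⟩ := exists_measurableSet_ae_eq_of_measurableSet_comap_prodMk hW' hYseq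
    hWW' (tailSigma_le_comap_prodMk (F := fun w y => S y w) (hS.comp measurable_swap) hrec E hE)
  exact measure_eq_zero_or_one_of_indep_of_ae_eq hYtail hE hE' hEE'

/-- Necessity direction of Theorem 3: if a posterior matching scheme is reliable (`W` is
a.s. `σ(Y_{1:∞})`-measurable), then the chain `(W̃_n)` is ergodic: its tail σ-algebra is
`ℙ̄`-trivial. -/
theorem pm_reliable_implies_ergodic
    {Ω 𝒲 𝒴 𝒩 : Type*} {mΩ : MeasurableSpace Ω}
    [MeasurableSpace 𝒲] [StandardBorelSpace 𝒲] [Nonempty 𝒲]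
    [MeasurableSpace 𝒴] [MeasurableSpace 𝒩]
    (μ : Measure Ω) [IsProbabilityMeasure μ]
    (W : Ω → 𝒲) (hW : Measurable W)
    (N : ℕ → Ω → 𝒩) (hN : ∀ n, Measurable (N n))
    -- memoryless time-invariant channel: i.i.d. noise independent of the message
    (hiid : iIndepFun N μ)
    (hident : ∀ n, Measure.map (N n) μ = Measure.map (N 0) μ)
    (hindep : IndepFun W (fun ω (n : ℕ) => N n ω) μ)
    (g : 𝒲 → 𝒩 → 𝒴) (hg : Measurable fun p : 𝒲 × 𝒩 => g p.1 p.2)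
    (S : 𝒴 → 𝒲 → 𝒲) (hS : Measurable fun p : 𝒴 × 𝒲 => S p.1 p.2)
    -- the posterior matching maps are invertible
    (hSinv : ∀ y, Function.Bijective (S y))
    (Wt : ℕ → Ω → 𝒲) (Y : ℕ → Ω → 𝒴)
    (hWt : ∀ n, Measurable (Wt n)) (hY : ∀ n, Measurable (Y n))
    (hW0 : Wt 0 = W)
    (hYdef : ∀ n ω, Y n ω = g (Wt n ω) (N n ω))
    (hrec : ∀ n ω, Wt (n + 1) ω = S (Y n ω) (Wt n ω))
    -- posterior matching: `S_y # P_{W̃_1|Y_1=y} = P_W` for (almost) all `y`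
    (hPM : ∀ᵐ y ∂(Measure.map (Y 0) μ),
      Measure.map (S y) ((condDistrib (Wt 0) (Y 0) μ) y) = Measure.map W μ)
    -- reliability: `W` is a.s. measurable w.r.t. `σ(Y_{1:∞})`
    (hreliable : ∃ W' : Ω → 𝒲,
      Measurable[⨆ n, MeasurableSpace.comap (Y n) inferInstance] W' ∧ W =ᵐ[μ] W') :
    ∀ E : Set Ω, MeasurableSet[tailSigma Wt] E → μ E = 0 ∨ μ E = 1 :=
  pm_reliable_implies_ergodic_general (mΩ := mΩ) μ W N hN hiid hident hindep g hg S hS Wt Y hWt hY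
    hW0 hYdef hrec hPM hreliable
end
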